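/- arXiv:1409.6798 — 2 statements merged into one kernel-verified Lean document; each statement's English description precedes it below -/
import Mathlib

section
/- Let E be an essentially small exact category (in the sense of Quillen), linear over a finite field k, with finite morphism spaces and finite first extension spaces: |Hom(A,B)| < ∞ and |Ext^1(A,B)| < ∞ for all objects A, B of E. Then the Hall algebra H(E) — the Q-vector space with basis the set of isomorphism classes [A] of objects of E and multiplication [A] ⋄ [C] = Σ_{B ∈ Iso(E)} (|Ext^1_E(A,C)_B| / |Hom_E(A,C)|) [B] — is an associative unital algebra, with unit the class [0] of the zero object. -/
/-!
Common definitions for formalizing "semi-derived Hall algebras" (Gorsky, arXiv:1409.6798):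
Quillen exact structures, Frobenius categories, conflations and (Yoneda-style) `Ext`-sets,
Hall algebra structure constants, stable categories, suspension/syzygy data,
Grothendieck groups, and localizations of Hall algebras.
-/

open CategoryTheory CategoryTheory.Limits ZeroObject

universe w v u v' u'

namespace HallPaper

section IsoClasses

variable {𝒞 : Type u} [Category.{v} 𝒞] {𝒟 : Type u'} [Category.{v'} 𝒟]

/-- The set of isomorphism classes of objects of a category. -/
def IsoCl (𝒞 : Type u) [Category.{v} 𝒞] : Type u :=
  Quotient (isIsomorphicSetoid 𝒞)

/-- The isomorphism class of an object. -/
def skel (A : 𝒞) : IsoCl 𝒞 := Quotient.mk (isIsomorphicSetoid 𝒞) A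

/-- The basis vector of the Hall module (the `ℚ`-vector space with basis the isomorphism
classes of objects) corresponding to an object. -/
noncomputable def hallBasis (A : 𝒞) : IsoCl 𝒞 →₀ ℚ := Finsupp.single (skel A) 1

/-- The map on isomorphism classes induced by a functor. -/
def skelMap (F : 𝒞 ⥤ 𝒟) : IsoCl 𝒞 → IsoCl 𝒟 :=
  @Quotient.map _ _ (isIsomorphicSetoid 𝒞) (isIsomorphicSetoid 𝒟) F.obj
    (fun _ _ h => h.elim fun e => ⟨F.mapIso e⟩)

/-- The `ℚ`-linear map between Hall modules induced by a functor,
`[M] ↦ [F(M)]` on basis vectors. -/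
noncomputable def hallMap (F : 𝒞 ⥤ 𝒟) : (IsoCl 𝒞 →₀ ℚ) →ₗ[ℚ] (IsoCl 𝒟 →₀ ℚ) :=
  Finsupp.lmapDomain ℚ ℚ (skelMap F)

end IsoClasses

/-- A Quillen exact structure on an additive category, given by the class of conflations
(admissible short exact sequences) `X ↣ Y ↠ Z`, encoded as the predicate `conf i p`. -/
structure ExactStructure (𝒞 : Type u) [Category.{v} 𝒞] [Preadditive 𝒞] [HasZeroObject 𝒞]
    [HasBinaryBiproducts 𝒞] where
  /-- `conf i p` says that `X ↣ Y ↠ Z` is a conflation. -/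
  conf : ∀ {X Y Z : 𝒞}, (X ⟶ Y) → (Y ⟶ Z) → Prop
  comp_zero : ∀ {X Y Z : 𝒞} {i : X ⟶ Y} {p : Y ⟶ Z}, conf i p → i ≫ p = 0
  is_kernel : ∀ {X Y Z : 𝒞} {i : X ⟶ Y} {p : Y ⟶ Z} (h : conf i p),
    Nonempty (IsLimit (KernelFork.ofι i (comp_zero h)))
  is_cokernel : ∀ {X Y Z : 𝒞} {i : X ⟶ Y} {p : Y ⟶ Z} (h : conf i p),
    Nonempty (IsColimit (CokernelCofork.ofπ p (comp_zero h)))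
  conf_iso : ∀ {X Y Z X' Y' Z' : 𝒞} {i : X ⟶ Y} {p : Y ⟶ Z}
    (eX : X ≅ X') (eY : Y ≅ Y') (eZ : Z ≅ Z') {i' : X' ⟶ Y'} {p' : Y' ⟶ Z'},
    conf i p → i ≫ eY.hom = eX.hom ≫ i' → p ≫ eZ.hom = eY.hom ≫ p' → conf i' p'
  split_conf : ∀ X Y : 𝒞, conf (biprod.inl : X ⟶ X ⊞ Y) (biprod.snd : X ⊞ Y ⟶ Y)
  infl_comp : ∀ {X Y Z : 𝒞} (i : X ⟶ Y) (j : Y ⟶ Z),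
    (∃ (W : 𝒞) (p : Y ⟶ W), conf i p) → (∃ (W : 𝒞) (p : Z ⟶ W), conf j p) →
    ∃ (W : 𝒞) (p : Z ⟶ W), conf (i ≫ j) p
  defl_comp : ∀ {X Y Z : 𝒞} (p : X ⟶ Y) (q : Y ⟶ Z),
    (∃ (W : 𝒞) (i : W ⟶ X), conf i p) → (∃ (W : 𝒞) (i : W ⟶ Y), conf i q) →
    ∃ (W : 𝒞) (i : W ⟶ X), conf i (p ≫ q)
  pushout_infl : ∀ {X Y Z X' : 𝒞} {i : X ⟶ Y} {p : Y ⟶ Z}, conf i p → ∀ f : X ⟶ X',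
    ∃ (Y' : 𝒞) (i' : X' ⟶ Y') (g : Y ⟶ Y'), IsPushout i f g i' ∧
      ∃ (W : 𝒞) (p' : Y' ⟶ W), conf i' p'
  pullback_defl : ∀ {X Y Z Z' : 𝒞} {i : X ⟶ Y} {p : Y ⟶ Z}, conf i p → ∀ f : Z' ⟶ Z,
    ∃ (Y' : 𝒞) (p' : Y' ⟶ Z') (g : Y' ⟶ Y), IsPullback g p' p f ∧
      ∃ (W : 𝒞) (i' : W ⟶ Y'), conf i' p'

section Exact

variable {𝒞 : Type u} [Category.{v} 𝒞] [Preadditive 𝒞] [HasZeroObject 𝒞] [HasBinaryBiproducts 𝒞]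

/-- An object `P` is projective (relative to an exact structure) if any morphism from `P`
lifts along every deflation. Equivalently, `Ext¹(P, -) = 0`. -/
def ExactStructure.Proj (E : ExactStructure 𝒞) (P : 𝒞) : Prop :=
  ∀ ⦃X Y Z : 𝒞⦄ (i : X ⟶ Y) (p : Y ⟶ Z), E.conf i p → ∀ f : P ⟶ Z, ∃ g : P ⟶ Y, g ≫ p = f

/-- An object `I` is injective (relative to an exact structure) if any morphism to `I`
extends along every inflation. Equivalently, `Ext¹(-, I) = 0`. -/
def ExactStructure.Inj (E : ExactStructure 𝒞) (I : 𝒞) : Prop :=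
  ∀ ⦃X Y Z : 𝒞⦄ (i : X ⟶ Y) (p : Y ⟶ Z), E.conf i p → ∀ f : X ⟶ I, ∃ g : Y ⟶ I, i ≫ g = f

/-- A Frobenius category: an exact category with enough projectives and enough injectives,
in which the projective objects coincide with the injective objects. -/
structure IsFrobenius (E : ExactStructure 𝒞) : Prop where
  enough_proj : ∀ X : 𝒞, ∃ (P W : 𝒞) (i : W ⟶ P) (p : P ⟶ X), E.Proj P ∧ E.conf i p
  enough_inj : ∀ X : 𝒞, ∃ (I W : 𝒞) (i : X ⟶ I) (p : I ⟶ W), E.Inj I ∧ E.conf i p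
  proj_iff_inj : ∀ P : 𝒞, E.Proj P ↔ E.Inj P

/-- A conflation `C ↣ mid ↠ A`, i.e. an extension of `A` by `C`. -/
structure Conf (E : ExactStructure 𝒞) (A C : 𝒞) where
  mid : 𝒞
  incl : C ⟶ mid
  quot : mid ⟶ A
  isConf : E.conf incl quot

/-- Equivalence of extensions: an isomorphism of the middle terms commuting with the
structure maps (and inducing the identity on the end terms). -/
def ConfRel (E : ExactStructure 𝒞) {A C : 𝒞} (e e' : Conf E A C) : Prop :=
  ∃ φ : e.mid ≅ e'.mid, e.incl ≫ φ.hom = e'.incl ∧ φ.hom ≫ e'.quot = e.quot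

/-- `Ext¹(A, C)`: the set of equivalence classes of extensions of `A` by `C`. -/
def Ext1 (E : ExactStructure 𝒞) (A C : 𝒞) : Type (max u v) :=
  Quot (ConfRel E (A := A) (C := C))

/-- The class of a conflation in `Ext¹`. -/
def Ext1.mk (E : ExactStructure 𝒞) {A C : 𝒞} (e : Conf E A C) : Ext1 E A C :=
  Quot.mk _ e

/-- The class in `Ext¹(A,C)` of the split extension `C ↣ C ⊕ A ↠ A`. -/
noncomputable def splitExt (E : ExactStructure 𝒞) (A C : 𝒞) : Ext1 E A C :=
  Ext1.mk E ⟨C ⊞ A, biprod.inl, biprod.snd, E.split_conf C A⟩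

/-- `|Ext¹(A, C)_B|`: the number of classes of extensions of `A` by `C` whose middle term is
isomorphic to `B`. -/
noncomputable def ext1CardWith (E : ExactStructure 𝒞) (A C B : 𝒞) : ℕ :=
  Nat.card {x : Ext1 E A C // ∃ e : Conf E A C, Ext1.mk E e = x ∧ Nonempty (e.mid ≅ B)}

/-- The structure constant `|Ext¹(A, C)_B| / |Hom(A, C)|` of the Hall algebra. -/
noncomputable def hallCoeff (E : ExactStructure 𝒞) (A C B : 𝒞) : ℚ :=
  (ext1CardWith E A C B : ℚ) / (Nat.card (A ⟶ C) : ℚ)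

/-- A bilinear multiplication on the Hall module with the Hall structure constants:
`[A] ⋄ [C] = ∑_B (|Ext¹(A,C)_B| / |Hom(A,C)|) [B]`. -/
structure HallMul (E : ExactStructure 𝒞) where
  mul : (IsoCl 𝒞 →₀ ℚ) →ₗ[ℚ] (IsoCl 𝒞 →₀ ℚ) →ₗ[ℚ] (IsoCl 𝒞 →₀ ℚ)
  mul_basis : ∀ A C B : 𝒞, mul (hallBasis A) (hallBasis C) (skel B) = hallCoeff E A C B

/-- A morphism factors through a projective-injective object. -/
def FactorsThruProj (E : ExactStructure 𝒞) {X Y : 𝒞} (f : X ⟶ Y) : Prop :=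
  ∃ (P : 𝒞) (u : X ⟶ P) (v : P ⟶ Y), E.Proj P ∧ u ≫ v = f

/-- Morphism space in the stable category: morphisms of `𝒞` modulo those factoring
through projective-injective objects. -/
def StHom (E : ExactStructure 𝒞) (X Y : 𝒞) : Type v :=
  Quot (fun f g : X ⟶ Y => FactorsThruProj E (f - g))

/-- The class in the stable category of a morphism. -/
def StHom.mk (E : ExactStructure 𝒞) {X Y : 𝒞} (f : X ⟶ Y) : StHom E X Y :=
  Quot.mk _ f

/-- Two objects are isomorphic in the stable category. -/
def StIso (E : ExactStructure 𝒞) (X Y : 𝒞) : Prop :=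
  ∃ (f : X ⟶ Y) (g : Y ⟶ X),
    StHom.mk E (f ≫ g) = StHom.mk E (𝟙 X) ∧ StHom.mk E (g ≫ f) = StHom.mk E (𝟙 Y)

/-- The isomorphism classes of objects of the stable category. -/
def StSkel (E : ExactStructure 𝒞) : Type u := Quot (StIso E)

/-- The stable isomorphism class of an object. -/
def stCl (E : ExactStructure 𝒞) (X : 𝒞) : StSkel E := Quot.mk _ X

/-- Suspension data for a Frobenius category: for each object `X` a conflation
`X ↣ I X ↠ S X` with `I X` projective-injective; `S` implements the suspension functor `Σ`
of the stable category on objects. -/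
structure SuspData (E : ExactStructure 𝒞) where
  S : 𝒞 → 𝒞
  I : 𝒞 → 𝒞
  ins : ∀ X : 𝒞, X ⟶ I X
  out : ∀ X : 𝒞, I X ⟶ S X
  proj : ∀ X : 𝒞, E.Proj (I X)
  isConf : ∀ X : 𝒞, E.conf (ins X) (out X)

variable {E : ExactStructure 𝒞}

/-- Iterated suspension `Σⁿ` on objects. -/
def SIter (Sd : SuspData E) : ℕ → 𝒞 → 𝒞
  | 0, X => X
  | n + 1, X => Sd.S (SIter Sd n X)

/-- Syzygy data for a Frobenius category: for each object `X` a conflation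
`Ω X ↣ P X ↠ X` with `P X` projective-injective (a choice of projective covers, giving
projective resolutions). -/
structure SyzData (E : ExactStructure 𝒞) where
  Om : 𝒞 → 𝒞
  P : 𝒞 → 𝒞
  ins : ∀ X : 𝒞, Om X ⟶ P X
  out : ∀ X : 𝒞, P X ⟶ X
  proj : ∀ X : 𝒞, E.Proj (P X)
  isConf : ∀ X : 𝒞, E.conf (ins X) (out X)

/-- Iterated syzygy `Ωⁿ` on objects. -/
def OmIter (D : SyzData E) : ℕ → 𝒞 → 𝒞
  | 0, X => X
  | n + 1, X => D.Om (OmIter D n X)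

/-- The differential `P(Ωⁿ⁺¹ M) ⟶ P(Ωⁿ M)` of the projective resolution
`⋯ → P(Ω² M) → P(Ω M) → P(M) → 0` of `M` determined by syzygy data. -/
def resDiff (D : SyzData E) (n : ℕ) (M : 𝒞) :
    D.P (OmIter D (n + 1) M) ⟶ D.P (OmIter D n M) :=
  D.out (OmIter D (n + 1) M) ≫ D.ins (OmIter D n M)

/-- Cocycles for `Ext^(q+1)(M, N)`: morphisms `P(Ω^(q+1) M) ⟶ N` killed by the differential. -/
def extCocycle (D : SyzData E) (q : ℕ) (M N : 𝒞) : Type v :=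
  {f : D.P (OmIter D (q + 1) M) ⟶ N // resDiff D (q + 1) M ≫ f = 0}

/-- `Ext^(q+1)(M, N)` in the exact category: the `(q+1)`-st cohomology of
`Hom(R(M)•, N)` for the projective resolution `R(M)•` of `M` given by the syzygy data. -/
def extGrp (D : SyzData E) (q : ℕ) (M N : 𝒞) : Type v :=
  Quot (fun f g : extCocycle D q M N =>
    ∃ h : D.P (OmIter D q M) ⟶ N, f.1 - g.1 = resDiff D q M ≫ h)

/-- The truncated relative Euler form
`⟨A,B⟩ = (|Hom_F(A,B)| / |Hom_F̄(A,B)|) ⬝ ∏_{0 < i ≤ N} |Ext^{-i}_F̄(A,B)|^((-1)^(i-1))`,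
where `Ext^{-i}_F̄(A, B) = Hom_F̄(Σⁱ A, B)`.  (Under the "left locally homologically finite"
assumption all but finitely many factors are trivial, so for `N` large enough this is the
relative Euler form.) -/
noncomputable def relEulerAt (Sd : SuspData E) (N : ℕ) (A B : 𝒞) : ℚ :=
  ((Nat.card (A ⟶ B) : ℚ) / (Nat.card (StHom E A B) : ℚ)) *
    ∏ i ∈ Finset.range N, ((Nat.card (StHom E (SIter Sd (i + 1) A) B) : ℚ) ^ ((-1 : ℤ) ^ i))

/-- The truncated structure constants of the derived Hall algebra of the stable category `F̄`:
`(|Ext¹_F̄(A,C)_β| / |Hom_F̄(A,C)|) ⬝ ∏_{0 < i ≤ N} |Ext^{-i}_F̄(A,C)|^((-1)^(i-1))`, where,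
by dévissage, `Ext¹_F̄(A,C)_β` is identified with the set of classes of conflations
`C ↣ mid ↠ A` in `F` whose middle term has stable isomorphism class `β`. -/
noncomputable def stDhCoeffAt (Sd : SuspData E) (N : ℕ) (A C : 𝒞) (β : StSkel E) : ℚ :=
  ((Nat.card {x : Ext1 E A C // ∃ e : Conf E A C, Ext1.mk E e = x ∧ stCl E e.mid = β} : ℚ) /
      (Nat.card (StHom E A C) : ℚ)) *
    ∏ i ∈ Finset.range N, ((Nat.card (StHom E (SIter Sd (i + 1) A) C) : ℚ) ^ ((-1 : ℤ) ^ i))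

end Exact

/-- A bundled associative unital `ℚ`-algebra. -/
structure BundledQAlg : Type (w + 1) where
  carrier : Type w
  [ring : Ring carrier]
  [alg : Algebra ℚ carrier]

attribute [instance] BundledQAlg.ring BundledQAlg.alg

section Localization

variable {𝒞 : Type u} [Category.{v} 𝒞] [Preadditive 𝒞] [HasZeroObject 𝒞] [HasBinaryBiproducts 𝒞]

/-- A realization of the semi-derived Hall algebra `SDH(F, P(F))`: the localization of the
Hall algebra `H(F)` at the classes `[P]` of all projective-injective objects, presented by its
universal property. -/
structure HallLocalization (E : ExactStructure 𝒞) (hm : HallMul E) (A : BundledQAlg.{w}) where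
  φ : (IsoCl 𝒞 →₀ ℚ) →ₗ[ℚ] A.carrier
  mul_hom : ∀ x y, φ (hm.mul x y) = φ x * φ y
  one_hom : φ (hallBasis (0 : 𝒞)) = 1
  inverts : ∀ P : 𝒞, E.Proj P → IsUnit (φ (hallBasis P))
  universal : ∀ (B : BundledQAlg.{w}) (ψ : (IsoCl 𝒞 →₀ ℚ) →ₗ[ℚ] B.carrier),
    (∀ x y, ψ (hm.mul x y) = ψ x * ψ y) → ψ (hallBasis (0 : 𝒞)) = 1 →
    (∀ P : 𝒞, E.Proj P → IsUnit (ψ (hallBasis P))) →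
    ∃! χ : A.carrier →+* B.carrier, ∀ x, χ (φ x) = ψ x

/-- The quantum torus of projective-injectives inside the semi-derived Hall algebra:
the subalgebra generated by the classes `[P]` of projective-injective objects and their
inverses. -/
def quantumTorus {E : ExactStructure 𝒞} {hm : HallMul E} {A : BundledQAlg.{w}}
    (L : HallLocalization E hm A) : Subalgebra ℚ A.carrier :=
  Algebra.adjoin ℚ {x : A.carrier | ∃ P : 𝒞, E.Proj P ∧
    (x = L.φ (hallBasis P) ∨ (x * L.φ (hallBasis P) = 1 ∧ L.φ (hallBasis P) * x = 1))}

end Localization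

section K0

variable {𝒞 : Type u} [Category.{v} 𝒞] [Preadditive 𝒞] [HasZeroObject 𝒞] [HasBinaryBiproducts 𝒞]

/-- The relations defining the split Grothendieck group of an additive category:
isomorphic objects are identified and `[A ⊕ B] = [A] + [B]`. -/
def splitRelations (𝒞 : Type u) [Category.{v} 𝒞] [Preadditive 𝒞] [HasZeroObject 𝒞]
    [HasBinaryBiproducts 𝒞] : Set (FreeAbelianGroup 𝒞) :=
  {x | ∃ A B : 𝒞, Nonempty (A ≅ B) ∧
        x = FreeAbelianGroup.of A - FreeAbelianGroup.of B} ∪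
  {x | ∃ A B : 𝒞, x = FreeAbelianGroup.of (A ⊞ B)
        - FreeAbelianGroup.of A - FreeAbelianGroup.of B}

/-- The split Grothendieck group `K₀^split` of an additive category. -/
def K0split (𝒞 : Type u) [Category.{v} 𝒞] [Preadditive 𝒞] [HasZeroObject 𝒞]
    [HasBinaryBiproducts 𝒞] : Type u :=
  FreeAbelianGroup 𝒞 ⧸ AddSubgroup.closure (splitRelations 𝒞)

noncomputable instance : AddCommGroup (K0split 𝒞) :=
  QuotientAddGroup.Quotient.addCommGroup _

/-- The class of an object in the split Grothendieck group. -/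
def K0split.gen (A : 𝒞) : K0split 𝒞 :=
  QuotientAddGroup.mk (FreeAbelianGroup.of A)

/-- The relations defining the Grothendieck group of the (split exact) full subcategory of
projective-injective objects. -/
def projRelations (E : ExactStructure 𝒞) : Set (FreeAbelianGroup {X : 𝒞 // E.Proj X}) :=
  {x | ∃ A B : {X : 𝒞 // E.Proj X}, Nonempty (A.1 ≅ B.1) ∧
        x = FreeAbelianGroup.of A - FreeAbelianGroup.of B} ∪
  {x | ∃ A B C : {X : 𝒞 // E.Proj X}, Nonempty (C.1 ≅ A.1 ⊞ B.1) ∧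
        x = FreeAbelianGroup.of C - FreeAbelianGroup.of A - FreeAbelianGroup.of B}

/-- The Grothendieck group `K₀(P(F))` of the full subcategory of projective-injective
objects (its exact structure splits, so this is the split Grothendieck group). -/
def K0P (E : ExactStructure 𝒞) : Type u :=
  FreeAbelianGroup {X : 𝒞 // E.Proj X} ⧸ AddSubgroup.closure (projRelations E)

noncomputable instance (E : ExactStructure 𝒞) : AddCommGroup (K0P E) :=
  QuotientAddGroup.Quotient.addCommGroup _

/-- The class of a projective-injective object in `K₀(P(F))`. -/
def K0P.gen (E : ExactStructure 𝒞) (X : 𝒞) (hX : E.Proj X) : K0P E :=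
  QuotientAddGroup.mk (FreeAbelianGroup.of ⟨X, hX⟩)

end K0

section StMap

variable {𝒞' : Type u'} [Category.{v'} 𝒞'] [Preadditive 𝒞'] [HasZeroObject 𝒞']
  [HasBinaryBiproducts 𝒞']
variable {𝒞 : Type u} [Category.{v} 𝒞] [Preadditive 𝒞] [HasZeroObject 𝒞] [HasBinaryBiproducts 𝒞]

/-- The map induced on stable morphism spaces by an additive functor sending
projective-injectives to projective-injectives. -/
def stMap (E' : ExactStructure 𝒞') (E : ExactStructure 𝒞) (F : 𝒞' ⥤ 𝒞) [F.Additive]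
    (hproj : ∀ P : 𝒞', E'.Proj P → E.Proj (F.obj P)) (X Y : 𝒞') :
    StHom E' X Y → StHom E (F.obj X) (F.obj Y) :=
  Quot.map (fun f => F.map f) (by
    rintro f g ⟨P, u, v, hP, huv⟩
    exact ⟨F.obj P, F.map u, F.map v, hproj P hP, by rw [← F.map_comp, huv, F.map_sub]⟩)

end StMap

/-!
By Riedtmann's formula, `|Ext¹(A, C)_B| / |Hom(A, C)| = |{conflations C ↣ B ↠ A}| / |Aut B|`:
`Aut B` acts on these conflations with the classes in `Ext¹(A, C)_B` as orbits, and the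
stabilizer of `C ↣ B ↠ A` (with maps `i`, `p`) consists of the automorphisms `1 + p h i`,
`h : A ⟶ C`. Hence the coefficient of `[X]` in `([A] ⋄ [C]) ⋄ [D]` is `1 / |Aut X|` times the
number of pairs of conflations `D ↣ X ↠ B`, `C ↣ B ↠ A` up to isomorphism of `B`, and in
`[A] ⋄ ([C] ⋄ [D])` it is `1 / |Aut X|` times the number of pairs `D ↣ B ↠ C`, `B ↣ X ↠ A`.
Both count the filtrations of `X` with subquotients `D`, `C`, `A`, and pulling back along
`C ↣ B`, resp. pushing out along `B ↠ C`, matches the two descriptions (Noether's isomorphism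
theorem in an exact category). The class of `0` is a unit since every extension of `A` by `0`
or of `0` by `A` has middle term `A` and splits.
-/

end HallPaper

lemma MulAction.card_mul_eq_of_card_stabilizer_eq {G α : Type*} [Group G] [Finite G] [Finite α]
    [MulAction G α] {h : ℕ} (hs : ∀ z : α, Nat.card (stabilizer G z) = h) :
    Nat.card α * h = Nat.card (orbitRel.Quotient G α) * Nat.card G := by
  have := Fintype.ofFinite (orbitRel.Quotient G α)
  have orbit_mul (z : α) : Nat.card (orbit G z) * h = Nat.card G := by
    rw [← hs z, Nat.card_coe_set_eq, ← index_stabilizer, Subgroup.index_mul_card]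
  rw [Nat.card_congr (selfEquivSigmaOrbits G α), Nat.card_sigma, Finset.sum_mul]
  simp only [orbit_mul, Finset.sum_const, Finset.card_univ, smul_eq_mul, Nat.card_eq_fintype_card]

lemma MulAction.card_eq_of_free {G α : Type*} [Group G] [Finite G] [Finite α] [MulAction G α]
    (hfree : ∀ (g : G) (z : α), g • z = z → g = 1) :
    Nat.card α = Nat.card (orbitRel.Quotient G α) * Nat.card G := by
  simpa using card_mul_eq_of_card_stabilizer_eq (G := G) (α := α) (h := 1) fun z => by
    rw [Subgroup.card_eq_one, eq_bot_iff]
    exact fun g hg => hfree g z hg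

noncomputable def Quotient.equivOfRel {α β : Sort*} {s : Setoid α} {t : Setoid β}
    (R : α → β → Prop) (exists_right : ∀ a, ∃ b, R a b) (exists_left : ∀ b, ∃ a, R a b)
    (resp_left : ∀ {a a' b}, a ≈ a' → R a b → R a' b)
    (resp_right : ∀ {a b b'}, b ≈ b' → R a b → R a b')
    (unique_right : ∀ {a b b'}, R a b → R a b' → b ≈ b')
    (unique_left : ∀ {a a' b}, R a b → R a' b → a ≈ a') :
    Quotient s ≃ Quotient t where
  toFun := Quotient.lift (fun a => ⟦(exists_right a).choose⟧) fun a _ h =>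
    Quotient.sound (unique_right (resp_left h (exists_right a).choose_spec)
      (exists_right _).choose_spec)
  invFun := Quotient.lift (fun b => ⟦(exists_left b).choose⟧) fun b _ h =>
    Quotient.sound (unique_left (resp_right h (exists_left b).choose_spec)
      (exists_left _).choose_spec)
  left_inv := Quotient.ind fun a => Quotient.sound
    (unique_left (exists_left _).choose_spec (exists_right a).choose_spec)
  right_inv := Quotient.ind fun b => Quotient.sound
    (unique_right (exists_right _).choose_spec (exists_left b).choose_spec)

lemma Finsupp.bilin_assoc_of_single {ι R : Type*} [CommSemiring R]
    (m : (ι →₀ R) →ₗ[R] (ι →₀ R) →ₗ[R] (ι →₀ R))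
    (h : ∀ a b c : ι, m (m (single a 1) (single b 1)) (single c 1) =
      m (single a 1) (m (single b 1) (single c 1))) (x y z : ι →₀ R) :
    m (m x y) z = m x (m y z) := by
  have key : m.compr₂ m = (LinearMap.llcomp R _ _ _).compl₁₂ m m :=
    Finsupp.basisSingleOne.ext fun a => Finsupp.basisSingleOne.ext fun b =>
      Finsupp.basisSingleOne.ext fun c => by simpa using h a b c
  exact LinearMap.congr_fun (LinearMap.congr_fun (LinearMap.congr_fun key x) y) z

namespace HallPaper

section Conflations

variable {𝒞 : Type u} [Category.{v} 𝒞] [Preadditive 𝒞] [HasZeroObject 𝒞] [HasBinaryBiproducts 𝒞]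

namespace ExactStructure

variable (E : ExactStructure 𝒞) {X X' Y Z Z' T : 𝒞} {i : X ⟶ Y} {p : Y ⟶ Z}

lemma mono_infl (h : E.conf i p) : Mono i :=
  ⟨fun _ _ hfg => Fork.IsLimit.hom_ext (E.is_kernel h).some (by simpa using hfg)⟩

lemma epi_defl (h : E.conf i p) : Epi p :=
  ⟨fun _ _ hfg => Cofork.IsColimit.hom_ext (E.is_cokernel h).some (by simpa using hfg)⟩

lemma exists_lift (h : E.conf i p) (t : T ⟶ Y) (ht : t ≫ p = 0) : ∃ s : T ⟶ X, s ≫ i = t :=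
  let ⟨s, hs⟩ := KernelFork.IsLimit.lift' (E.is_kernel h).some t ht
  ⟨s, by simpa using hs⟩

lemma exists_desc (h : E.conf i p) (t : Y ⟶ T) (ht : i ≫ t = 0) : ∃ s : Z ⟶ T, p ≫ s = t :=
  let ⟨s, hs⟩ := CokernelCofork.IsColimit.desc' (E.is_cokernel h).some t ht
  ⟨s, by simpa using hs⟩

lemma infl_unique {i' : X' ⟶ Y} (h : E.conf i p) (h' : E.conf i' p) :
    ∃ e : X ≅ X', e.hom ≫ i' = i :=
  ⟨(E.is_kernel h).some.conePointUniqueUpToIso (E.is_kernel h').some, by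
    simpa using (E.is_kernel h).some.conePointUniqueUpToIso_hom_comp (E.is_kernel h').some
      WalkingParallelPair.zero⟩

lemma defl_unique {p' : Y ⟶ Z'} (h : E.conf i p) (h' : E.conf i p') :
    ∃ e : Z ≅ Z', p ≫ e.hom = p' :=
  ⟨(E.is_cokernel h).some.coconePointUniqueUpToIso (E.is_cokernel h').some, by
    simpa using (E.is_cokernel h).some.comp_coconePointUniqueUpToIso_hom (E.is_cokernel h').some
      WalkingParallelPair.one⟩

lemma conf_of_isKernel {i' : X' ⟶ Y} (h : E.conf i p) (w : i' ≫ p = 0)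
    (hl : IsLimit (KernelFork.ofι i' w)) : E.conf i' p := by
  obtain ⟨hk⟩ := E.is_kernel h
  refine E.conf_iso (hk.conePointUniqueUpToIso hl) (Iso.refl Y) (Iso.refl Z) h ?_ (by simp)
  simpa using (hk.conePointUniqueUpToIso_hom_comp hl WalkingParallelPair.zero).symm

lemma conf_of_isCokernel {p' : Y ⟶ Z'} (h : E.conf i p) (w : i ≫ p' = 0)
    (hc : IsColimit (CokernelCofork.ofπ p' w)) : E.conf i p' := by
  obtain ⟨hk⟩ := E.is_cokernel h
  refine E.conf_iso (Iso.refl X) (Iso.refl Y) (hk.coconePointUniqueUpToIso hc) h (by simp) ?_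
  simpa using hk.comp_coconePointUniqueUpToIso_hom hc WalkingParallelPair.one

lemma isIso_infl_of_isZero (h : E.conf i p) (hZ : IsZero Z) : IsIso i :=
  KernelFork.IsLimit.isIso_ι _ (E.is_kernel h).some (hZ.eq_of_tgt _ _)

lemma isIso_defl_of_isZero (h : E.conf i p) (hX : IsZero X) : IsIso p :=
  CokernelCofork.IsColimit.isIso_π _ (E.is_cokernel h).some (hX.eq_of_src _ _)

end ExactStructure

namespace ExactStructure

variable (E : ExactStructure 𝒞)

lemma conf_lift_of_isPullback {D X B C Y : 𝒞} {j : D ⟶ X} {q : X ⟶ B} {f : C ⟶ B} {g : Y ⟶ X}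
    {q' : Y ⟶ C} (hjq : E.conf j q) (hpb : IsPullback g q' q f)
    (hq' : ∃ (W : 𝒞) (i : W ⟶ Y), E.conf i q') :
    E.conf (hpb.lift j 0 (by simp [E.comp_zero hjq])) q' := by
  obtain ⟨W, i, hiq'⟩ := hq'
  have := E.mono_infl hjq
  have hw : j ≫ q = 0 ≫ f := by simp [E.comp_zero hjq]
  have : Mono (hpb.lift j 0 hw) := mono_of_mono_fac (hpb.lift_fst _ _ hw)
  refine E.conf_of_isKernel hiq' (hpb.lift_snd _ _ _) (KernelFork.IsLimit.ofι' _ _ fun k hk => ?_)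
  have hs := E.exists_lift hjq (k ≫ g) (by rw [Category.assoc, hpb.w, reassoc_of% hk, zero_comp])
  exact ⟨hs.choose, hpb.hom_ext (by simp [hs.choose_spec]) (by simp [hk])⟩

lemma conf_of_isPullback {D X B C A Y : 𝒞} {j : D ⟶ X} {q : X ⟶ B} {i : C ⟶ B} {p : B ⟶ A}
    {g : Y ⟶ X} {q' : Y ⟶ C} (hjq : E.conf j q) (hip : E.conf i p) (hpb : IsPullback g q' q i) :
    E.conf g (q ≫ p) := by
  obtain ⟨W, i', hi'⟩ := E.defl_comp q p ⟨D, j, hjq⟩ ⟨C, i, hip⟩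
  have := E.mono_infl hip
  have := hpb.mono_fst_of_mono
  have hg : g ≫ q ≫ p = 0 := by rw [reassoc_of% hpb.w, E.comp_zero hip, Limits.comp_zero]
  refine E.conf_of_isKernel hi' hg (KernelFork.IsLimit.ofι' _ _ fun k hk => ?_)
  have hs := E.exists_lift hip (k ≫ q) (by rwa [Category.assoc])
  exact ⟨hpb.lift k hs.choose hs.choose_spec.symm, hpb.lift_fst _ _ _⟩

lemma conf_desc_of_isPushout {B X A C Y : 𝒞} {j : B ⟶ X} {q : X ⟶ A} {f : B ⟶ C} {g : X ⟶ Y}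
    {j' : C ⟶ Y} (hjq : E.conf j q) (hpo : IsPushout j f g j')
    (hj' : ∃ (W : 𝒞) (p : Y ⟶ W), E.conf j' p) :
    E.conf j' (hpo.desc q 0 (by simp [E.comp_zero hjq])) := by
  obtain ⟨W, p, hj'p⟩ := hj'
  have := E.epi_defl hjq
  have hw : j ≫ q = f ≫ 0 := by simp [E.comp_zero hjq]
  have : Epi (hpo.desc q 0 hw) := epi_of_epi_fac (hpo.inl_desc _ _ hw)
  refine E.conf_of_isCokernel hj'p (hpo.inr_desc _ _ _)
    (CokernelCofork.IsColimit.ofπ' _ _ fun k hk => ?_)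
  have hs := E.exists_desc hjq (g ≫ k) (by rw [← Category.assoc, hpo.w, Category.assoc, hk,
    Limits.comp_zero])
  exact ⟨hs.choose, hpo.hom_ext (by simp [hs.choose_spec]) (by simp [hk])⟩

lemma conf_of_isPushout {D B C X A Y : 𝒞} {i : D ⟶ B} {p : B ⟶ C} {j : B ⟶ X} {q : X ⟶ A}
    {g : X ⟶ Y} {j' : C ⟶ Y} (hip : E.conf i p) (hjq : E.conf j q) (hpo : IsPushout j p g j') :
    E.conf (i ≫ j) g := by
  obtain ⟨W, q', hq'⟩ := E.infl_comp i j ⟨C, p, hip⟩ ⟨A, q, hjq⟩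
  have := E.epi_defl hip
  have := hpo.epi_inl_of_epi
  have hg : (i ≫ j) ≫ g = 0 := by rw [Category.assoc, hpo.w, ← Category.assoc, E.comp_zero hip,
    zero_comp]
  refine E.conf_of_isCokernel hq' hg (CokernelCofork.IsColimit.ofπ' _ _ fun k hk => ?_)
  have hs := E.exists_desc hip (j ≫ k) (by rwa [← Category.assoc])
  exact ⟨hpo.desc k hs.choose hs.choose_spec.symm, hpo.inl_desc _ _ _⟩

end ExactStructure

/-- Conflations `C ↣ B ↠ A` with all three terms fixed (in `Conf` the middle term varies). -/
@[ext]
structure Conflation (E : ExactStructure 𝒞) (C B A : 𝒞) where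
  infl : C ⟶ B
  defl : B ⟶ A
  conf : E.conf infl defl

namespace Conflation

variable {E : ExactStructure 𝒞} {C C' B B' A A' : 𝒞}

instance [Finite (C ⟶ B)] [Finite (B ⟶ A)] : Finite (Conflation E C B A) :=
  Finite.of_injective (fun z => (z.infl, z.defl)) fun _ _ h =>
    Conflation.ext (congrArg Prod.fst h) (congrArg Prod.snd h)

def congr (eC : C ≅ C') (eB : B ≅ B') (eA : A ≅ A') :
    Conflation E C B A ≃ Conflation E C' B' A' where
  toFun z := ⟨eC.inv ≫ z.infl ≫ eB.hom, eB.inv ≫ z.defl ≫ eA.hom,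
    E.conf_iso eC eB eA z.conf (by simp) (by simp)⟩
  invFun z := ⟨eC.hom ≫ z.infl ≫ eB.inv, eB.hom ≫ z.defl ≫ eA.inv,
    E.conf_iso eC.symm eB.symm eA.symm z.conf (by simp) (by simp)⟩
  left_inv z := by ext <;> simp
  right_inv z := by ext <;> simp

end Conflation

end Conflations

section IsoActions

variable {𝒞 : Type u} [Category.{v} 𝒞]

lemma skel_out (β : IsoCl 𝒞) : skel (Quotient.out β) = β := Quotient.out_eq β

lemma skel_eq_skel_iff {X Y : 𝒞} : skel X = skel Y ↔ Nonempty (X ≅ Y) := Quotient.eq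

/-- Equivalently, a functor `Core 𝒞 ⥤ Type w`. -/
structure IsoAction (F : 𝒞 → Type w) where
  transport : ∀ {B B' : 𝒞}, (B ≅ B') → F B → F B'
  transport_refl : ∀ {B : 𝒞} (x : F B), transport (Iso.refl B) x = x
  transport_trans : ∀ {B B' B'' : 𝒞} (e : B ≅ B') (e' : B' ≅ B'') (x : F B),
    transport (e ≪≫ e') x = transport e' (transport e x)

namespace IsoAction

variable {F G : 𝒞 → Type w} (S : IsoAction F)

@[simp]
lemma transport_symm_transport {B B' : 𝒞} (e : B ≅ B') (x : F B) :
    S.transport e.symm (S.transport e x) = x := by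
  rw [← S.transport_trans, Iso.self_symm_id, S.transport_refl]

def Rel (x y : Σ B, F B) : Prop := ∃ e : x.1 ≅ y.1, S.transport e x.2 = y.2

lemma rel_mk_iff {B B' : 𝒞} {x : F B} {x' : F B'} :
    S.Rel ⟨B, x⟩ ⟨B', x'⟩ ↔ ∃ e : B ≅ B', S.transport e x = x' := Iff.rfl

def setoid : Setoid (Σ B, F B) where
  r := S.Rel
  iseqv :=
    { refl := fun x => ⟨Iso.refl _, S.transport_refl _⟩
      symm := fun ⟨e, he⟩ => ⟨e.symm, by rw [← he, transport_symm_transport]⟩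
      trans := fun ⟨e, he⟩ ⟨e', he'⟩ => ⟨e ≪≫ e', by rw [S.transport_trans, he, he']⟩ }

def Classes : Type max u w := Quotient S.setoid

def base : S.Classes → IsoCl 𝒞 :=
  Quotient.lift (fun x => skel x.1) fun _ _ ⟨e, _⟩ => Quotient.sound ⟨e⟩

@[reducible]
def mulAction (B : 𝒞) : MulAction (Aut B) (F B) where
  smul φ x := S.transport φ x
  one_smul := S.transport_refl
  mul_smul φ ψ := S.transport_trans ψ φ

def IsFree : Prop := ∀ ⦃B : 𝒞⦄ (φ : B ≅ B) (x : F B), S.transport φ x = x → φ = Iso.refl B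

noncomputable def orbitsEquivFiber (B : 𝒞) :
    letI := S.mulAction B
    MulAction.orbitRel.Quotient (Aut B) (F B) ≃ {c : S.Classes // S.base c = skel B} := by
  letI := S.mulAction B
  refine Equiv.ofBijective (Quotient.lift (fun x => ⟨⟦⟨B, x⟩⟧, rfl⟩) ?_) ⟨?_, ?_⟩
  · rintro _ y ⟨φ, rfl⟩
    exact Subtype.ext (Quotient.sound ⟨φ.symm, S.transport_symm_transport φ y⟩)
  · refine Quotient.ind₂ fun x y hxy => Quotient.sound ?_
    obtain ⟨φ, hφ : S.transport φ x = y⟩ := Quotient.exact (congrArg Subtype.val hxy)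
    exact ⟨(φ.symm : Aut B), hφ ▸ S.transport_symm_transport φ x⟩
  · rintro ⟨c, hc⟩
    obtain ⟨⟨B', y⟩, rfl⟩ := Quotient.exists_rep c
    obtain ⟨e⟩ := skel_eq_skel_iff.1 hc
    exact ⟨⟦S.transport e y⟧,
      Subtype.ext (Quotient.sound ⟨e.symm, S.transport_symm_transport e y⟩)⟩

lemma card_fiber_mul_card_aut (hS : S.IsFree) (B : 𝒞) [Finite (F B)] [Finite (Aut B)] :
    Nat.card {c : S.Classes // S.base c = skel B} * Nat.card (Aut B) = Nat.card (F B) := by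
  let := S.mulAction B
  rw [← Nat.card_congr (S.orbitsEquivFiber B)]
  exact (MulAction.card_eq_of_free (G := Aut B) fun φ x => hS φ x).symm

lemma nonempty_out_base (c : S.Classes) : Nonempty (F (Quotient.out (S.base c))) := by
  obtain ⟨⟨B, x⟩, rfl⟩ := Quotient.exists_rep c
  obtain ⟨e⟩ := skel_eq_skel_iff.1 (skel_out (skel B)).symm
  exact ⟨S.transport e x⟩

lemma card_classes (hS : S.IsFree) [∀ B, Finite (F B)] [∀ B : 𝒞, Finite (Aut B)]
    (T : Finset (IsoCl 𝒞)) (hT : ∀ β : IsoCl 𝒞, Nonempty (F (Quotient.out β)) → β ∈ T) :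
    (Nat.card S.Classes : ℚ) =
      ∑ β ∈ T, (Nat.card (F (Quotient.out β)) : ℚ) / Nat.card (Aut (Quotient.out β)) := by
  let baseT (c : S.Classes) : T := ⟨S.base c, hT _ (S.nonempty_out_base c)⟩
  have card_fiber (β : IsoCl 𝒞) : (Nat.card {c // S.base c = β} : ℚ) =
      Nat.card (F (Quotient.out β)) / Nat.card (Aut (Quotient.out β)) := by
    have h := S.card_fiber_mul_card_aut hS (Quotient.out β)
    rw [skel_out] at h
    rw [eq_div_iff (by exact_mod_cast Nat.card_pos.ne')]
    exact_mod_cast h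
  have fiber_equiv (β : T) : {c // baseT c = β} ≃ {c // S.base c = β} :=
    Equiv.subtypeEquivRight fun _ => Subtype.ext_iff
  have (β : T) : Finite {c // baseT c = β} := by
    obtain ⟨B, hB⟩ := Quotient.exists_rep β.1
    exact Finite.of_equiv _ ((S.orbitsEquivFiber B).trans (hB ▸ fiber_equiv β).symm)
  rw [Nat.card_congr (Equiv.sigmaFiberEquiv baseT).symm, Nat.card_sigma, ← Finset.sum_coe_sort T]
  push_cast
  exact Finset.sum_congr rfl fun β _ => by rw [Nat.card_congr (fiber_equiv β), card_fiber]

@[simps]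
def prod (T : IsoAction G) : IsoAction fun B => F B × G B where
  transport e x := (S.transport e x.1, T.transport e x.2)
  transport_refl x := by simp [transport_refl]
  transport_trans e e' x := by simp [transport_trans]

variable {S} in
lemma IsFree.prod {T : IsoAction G} (hT : T.IsFree) : (S.prod T).IsFree :=
  fun _ φ x h => hT φ x.2 (congrArg Prod.snd h)

end IsoAction

end IsoActions

section Extensions

variable {𝒞 : Type u} [Category.{v} 𝒞] [Preadditive 𝒞] [HasZeroObject 𝒞] [HasBinaryBiproducts 𝒞]
  (E : ExactStructure 𝒞)

instance {X Y : 𝒞} [Finite (X ⟶ Y)] : Finite (X ≅ Y) :=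
  Finite.of_injective Iso.hom fun _ _ h => Iso.ext h

instance {X : 𝒞} [Finite (X ⟶ X)] : Finite (Aut X) :=
  inferInstanceAs (Finite (X ≅ X))

namespace Conflation

def midAction (C A : 𝒞) : IsoAction fun B => Conflation E C B A where
  transport e z := ⟨z.infl ≫ e.hom, e.inv ≫ z.defl,
    E.conf_iso (Iso.refl C) e (Iso.refl A) z.conf (by simp) (by simp)⟩
  transport_refl _ := by ext <;> simp
  transport_trans _ _ _ := by ext <;> simp

def kerAction (X A : 𝒞) : IsoAction fun B => Conflation E B X A where
  transport e z := ⟨e.inv ≫ z.infl, z.defl,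
    E.conf_iso e (Iso.refl X) (Iso.refl A) z.conf (by simp) (by simp)⟩
  transport_refl _ := by ext <;> simp
  transport_trans _ _ _ := by ext <;> simp

def cokerAction (D X : 𝒞) : IsoAction fun B => Conflation E D X B where
  transport e z := ⟨z.infl, z.defl ≫ e.hom,
    E.conf_iso (Iso.refl D) (Iso.refl X) e z.conf (by simp) (by simp)⟩
  transport_refl _ := by ext <;> simp
  transport_trans _ _ _ := by ext <;> simp

variable {E} {C B B' A X D : 𝒞}

@[simp] lemma midAction_transport_infl (e : B ≅ B') (z : Conflation E C B A) :
    ((midAction E C A).transport e z).infl = z.infl ≫ e.hom := rfl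

@[simp] lemma midAction_transport_defl (e : B ≅ B') (z : Conflation E C B A) :
    ((midAction E C A).transport e z).defl = e.inv ≫ z.defl := rfl

@[simp] lemma kerAction_transport_infl (e : B ≅ B') (z : Conflation E B X A) :
    ((kerAction E X A).transport e z).infl = e.inv ≫ z.infl := rfl

@[simp] lemma kerAction_transport_defl (e : B ≅ B') (z : Conflation E B X A) :
    ((kerAction E X A).transport e z).defl = z.defl := rfl

@[simp] lemma cokerAction_transport_infl (e : B ≅ B') (z : Conflation E D X B) :
    ((cokerAction E D X).transport e z).infl = z.infl := rfl

@[simp] lemma cokerAction_transport_defl (e : B ≅ B') (z : Conflation E D X B) :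
    ((cokerAction E D X).transport e z).defl = z.defl ≫ e.hom := rfl

variable (E) in
lemma kerAction_isFree (X A : 𝒞) : (kerAction E X A).IsFree := fun B φ z h => by
  have := E.mono_infl z.conf
  have hinv : φ.inv = 𝟙 B := (cancel_mono z.infl).1 (by simpa using congrArg infl h)
  exact Iso.ext (by simpa [hinv] using φ.hom_inv_id)

variable (E) in
lemma cokerAction_isFree (D X : 𝒞) : (cokerAction E D X).IsFree := fun B φ z h => by
  have := E.epi_defl z.conf
  exact Iso.ext ((cancel_epi z.defl).1 (by simpa using congrArg defl h))

@[simps]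
def unipotentAut (z : Conflation E C B A) (h : A ⟶ C) : Aut B where
  hom := 𝟙 B + z.defl ≫ h ≫ z.infl
  inv := 𝟙 B - z.defl ≫ h ≫ z.infl
  hom_inv_id := by simp [Preadditive.comp_sub, Preadditive.add_comp, reassoc_of% E.comp_zero z.conf]
  inv_hom_id := by simp [Preadditive.comp_add, Preadditive.sub_comp, reassoc_of% E.comp_zero z.conf]

instance : MulAction (Aut B) (Conflation E C B A) := (midAction E C A).mulAction B

lemma mem_stabilizer_iff (z : Conflation E C B A) (φ : Aut B) :
    φ ∈ MulAction.stabilizer (Aut B) z ↔ z.infl ≫ φ.hom = z.infl ∧ φ.inv ≫ z.defl = z.defl :=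
  MulAction.mem_stabilizer_iff.trans Conflation.ext_iff

noncomputable def homEquivStabilizer (z : Conflation E C B A) :
    (A ⟶ C) ≃ MulAction.stabilizer (Aut B) z := by
  have := E.mono_infl z.conf
  have := E.epi_defl z.conf
  have hz := E.comp_zero z.conf
  refine Equiv.ofBijective (fun h => ⟨unipotentAut z h, (mem_stabilizer_iff z _).2 ?_⟩) ⟨?_, ?_⟩
  · simp [Preadditive.comp_add, reassoc_of% hz, hz]
  · intro h h' hh
    have := congrArg (fun φ : MulAction.stabilizer (Aut B) z => (φ : Aut B).hom) hh
    exact (cancel_epi z.defl).1 ((cancel_mono z.infl).1 (by simpa [← Category.assoc] using this))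
  · rintro ⟨φ, hφ⟩
    obtain ⟨hi, hp⟩ := (mem_stabilizer_iff z φ).1 hφ
    obtain ⟨s, hs⟩ := E.exists_desc z.conf (φ.hom - 𝟙 B) (by simp [Preadditive.comp_sub, hi])
    obtain ⟨h, rfl⟩ := E.exists_lift z.conf s ((cancel_epi z.defl).1 (by
      simp [← Category.assoc, hs, Preadditive.sub_comp, ← (Iso.inv_comp_eq φ).1 hp]))
    exact ⟨h, Subtype.ext (Aut.ext (by simp [hs]))⟩

end Conflation

def ext1EquivClasses (A C : 𝒞) : Ext1 E A C ≃ (Conflation.midAction E C A).Classes :=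
  Quot.congr
    { toFun e := ⟨e.mid, ⟨e.incl, e.quot, e.isConf⟩⟩
      invFun x := ⟨x.1, x.2.infl, x.2.defl, x.2.conf⟩ }
    fun e e' => exists_congr fun φ => by
      rw [Conflation.ext_iff]
      exact and_congr_right' (eq_comm.trans (Iso.inv_comp_eq φ).symm)

lemma ext1CardWith_eq_card_fiber (A C B : 𝒞) :
    ext1CardWith E A C B =
      Nat.card {c : (Conflation.midAction E C A).Classes // IsoAction.base _ c = skel B} := by
  refine Nat.card_congr (Equiv.subtypeEquiv (ext1EquivClasses E A C) fun x => ?_)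
  induction x using Quot.ind with | mk e => ?_
  refine ⟨fun ⟨e', he', hB⟩ => ?_, fun h => ⟨e, rfl, skel_eq_skel_iff.1 h⟩⟩
  rw [← he']
  exact skel_eq_skel_iff.2 hB

/-- Riedtmann's formula. -/
theorem hallCoeff_eq_card_div_card_aut [∀ X Y : 𝒞, Finite (X ⟶ Y)] (A C B : 𝒞) :
    hallCoeff E A C B = Nat.card (Conflation E C B A) / Nat.card (Aut B) := by
  have h := MulAction.card_mul_eq_of_card_stabilizer_eq (G := Aut B) (α := Conflation E C B A)
    fun z => (Nat.card_congr (Conflation.homEquivStabilizer z)).symm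
  rw [Nat.card_congr ((Conflation.midAction E C A).orbitsEquivFiber B),
    ← ext1CardWith_eq_card_fiber] at h
  rw [hallCoeff, div_eq_div_iff (by exact_mod_cast Nat.card_pos.ne')
    (by exact_mod_cast Nat.card_pos.ne')]
  exact_mod_cast h.symm

open Classical in
lemma ext1CardWith_eq_ite {A C Y : 𝒞} [Subsingleton (Ext1 E A C)]
    (hmid : ∀ e : Conf E A C, Nonempty (e.mid ≅ Y)) (B : 𝒞) :
    ext1CardWith E A C B = if Nonempty (Y ≅ B) then 1 else 0 := by
  have key (x : Ext1 E A C) :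
      (∃ e : Conf E A C, Ext1.mk E e = x ∧ Nonempty (e.mid ≅ B)) ↔ Nonempty (Y ≅ B) := by
    obtain ⟨e, rfl⟩ := Quot.exists_rep x
    exact ⟨fun ⟨e', _, ⟨φ⟩⟩ => ⟨(hmid e').some.symm ≪≫ φ⟩,
      fun ⟨φ⟩ => ⟨e, rfl, ⟨(hmid e).some ≪≫ φ⟩⟩⟩
  rw [ext1CardWith, Nat.card_congr (Equiv.subtypeEquivRight key)]
  split_ifs with h
  · exact Nat.card_eq_one_iff_unique.2 ⟨inferInstance, ⟨⟨splitExt E A C, h⟩⟩⟩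
  · simp [h]

open Classical in
lemma ext1CardWith_zero_left (C B : 𝒞) :
    ext1CardWith E 0 C B = if Nonempty (C ≅ B) then 1 else 0 := by
  have (e : Conf E 0 C) : IsIso e.incl := E.isIso_infl_of_isZero e.isConf (isZero_zero 𝒞)
  have : Subsingleton (Ext1 E 0 C) := ⟨Quot.ind fun e => Quot.ind fun e' => Quot.sound
    ⟨(asIso e.incl).symm ≪≫ asIso e'.incl, by simp, HasZeroObject.to_zero_ext _ _⟩⟩
  exact ext1CardWith_eq_ite E (fun e => ⟨(asIso e.incl).symm⟩) B

open Classical in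
lemma ext1CardWith_zero_right (A B : 𝒞) :
    ext1CardWith E A 0 B = if Nonempty (A ≅ B) then 1 else 0 := by
  have (e : Conf E A 0) : IsIso e.quot := E.isIso_defl_of_isZero e.isConf (isZero_zero 𝒞)
  have : Subsingleton (Ext1 E A 0) := ⟨Quot.ind fun e => Quot.ind fun e' => Quot.sound
    ⟨asIso e.quot ≪≫ (asIso e'.quot).symm, HasZeroObject.from_zero_ext _ _, by simp⟩⟩
  exact ext1CardWith_eq_ite E (fun e => ⟨asIso e.quot⟩) B

end Extensions

section Noether

variable {𝒞 : Type u} [Category.{v} 𝒞] [Preadditive 𝒞] [HasZeroObject 𝒞] [HasBinaryBiproducts 𝒞]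
  (E : ExactStructure 𝒞) (A C D X : 𝒞)

/-- Filtrations of `X` with subquotients `D`, `C`, `A` (from the bottom), described by the
quotient maps `X ↠ B ↠ A`. -/
def quotientFlags : IsoAction fun B => Conflation E C B A × Conflation E D X B :=
  (Conflation.midAction E C A).prod (Conflation.cokerAction E D X)

/-- The same filtrations, described by the inclusions `D ↣ B ↣ X`. -/
def subobjectFlags : IsoAction fun B => Conflation E D B C × Conflation E B X A :=
  (Conflation.midAction E D C).prod (Conflation.kerAction E X A)

variable {E A C D X}

/-- The two descriptions of a filtration match: the four conflations form the diagram
```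
D ↣ B' ↠ C
‖   ↓    ↓
D ↣ X  ↠ B
    ↓    ↓
    A  = A
```
-/
def FlagsCorrespond (u : Σ B, Conflation E C B A × Conflation E D X B)
    (v : Σ B, Conflation E D B C × Conflation E B X A) : Prop :=
  u.2.2.infl = v.2.1.infl ≫ v.2.2.infl ∧ v.2.2.infl ≫ u.2.2.defl = v.2.1.defl ≫ u.2.1.infl ∧
    u.2.2.defl ≫ u.2.1.defl = v.2.2.defl

lemma FlagsCorrespond.exists_subobjectFlag (u : Σ B, Conflation E C B A × Conflation E D X B) :
    ∃ v, FlagsCorrespond u v := by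
  obtain ⟨B, c, d⟩ := u
  obtain ⟨Y, q', g, hpb, hq'⟩ := E.pullback_defl d.conf c.infl
  exact ⟨⟨Y, ⟨_, _, E.conf_lift_of_isPullback d.conf hpb hq'⟩,
    ⟨_, _, E.conf_of_isPullback d.conf c.conf hpb⟩⟩, (hpb.lift_fst _ _ _).symm, hpb.w, rfl⟩

lemma FlagsCorrespond.exists_quotientFlag (v : Σ B, Conflation E D B C × Conflation E B X A) :
    ∃ u, FlagsCorrespond u v := by
  obtain ⟨B, c, d⟩ := v
  obtain ⟨Y, j', g, hpo, hj'⟩ := E.pushout_infl d.conf c.defl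
  exact ⟨⟨Y, ⟨_, _, E.conf_desc_of_isPushout d.conf hpo hj'⟩,
    ⟨_, _, E.conf_of_isPushout c.conf d.conf hpo⟩⟩, rfl, hpo.w, hpo.inl_desc _ _ _⟩

lemma FlagsCorrespond.of_quotientFlags_rel {u u' : Σ B, Conflation E C B A × Conflation E D X B}
    {v : Σ B, Conflation E D B C × Conflation E B X A} (huu' : (quotientFlags E A C D X).Rel u u')
    (h : FlagsCorrespond u v) : FlagsCorrespond u' v := by
  obtain ⟨B, c, d⟩ := u
  obtain ⟨B', c', d'⟩ := u'
  obtain ⟨e, he⟩ := (IsoAction.rel_mk_iff _).1 huu'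
  simp only [quotientFlags, IsoAction.prod_transport, Prod.mk.injEq] at he
  obtain ⟨rfl, rfl⟩ := he
  obtain ⟨h₁, h₂, h₃⟩ := h
  exact ⟨by simpa using h₁, by simp [reassoc_of% h₂], by simpa using h₃⟩

lemma FlagsCorrespond.of_subobjectFlags_rel {u : Σ B, Conflation E C B A × Conflation E D X B}
    {v v' : Σ B, Conflation E D B C × Conflation E B X A}
    (hvv' : (subobjectFlags E A C D X).Rel v v') (h : FlagsCorrespond u v) :
    FlagsCorrespond u v' := by
  obtain ⟨B, c, d⟩ := v
  obtain ⟨B', c', d'⟩ := v'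
  obtain ⟨e, he⟩ := (IsoAction.rel_mk_iff _).1 hvv'
  simp only [subobjectFlags, IsoAction.prod_transport, Prod.mk.injEq] at he
  obtain ⟨rfl, rfl⟩ := he
  obtain ⟨h₁, h₂, h₃⟩ := h
  exact ⟨by simpa using h₁, by simp [h₂], by simpa using h₃⟩

lemma FlagsCorrespond.unique_subobjectFlag {u : Σ B, Conflation E C B A × Conflation E D X B}
    {v v' : Σ B, Conflation E D B C × Conflation E B X A} (h : FlagsCorrespond u v)
    (h' : FlagsCorrespond u v') : (subobjectFlags E A C D X).Rel v v' := by
  obtain ⟨B, c, d⟩ := u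
  obtain ⟨B', c', d'⟩ := v
  obtain ⟨B'', c'', d''⟩ := v'
  obtain ⟨h₁, h₂, h₃⟩ := h
  obtain ⟨h₁', h₂', h₃'⟩ := h'
  have := E.mono_infl c.conf
  have := E.mono_infl d''.conf
  obtain ⟨e, he⟩ := E.infl_unique d'.conf (h₃.symm.trans h₃' ▸ d''.conf)
  refine (IsoAction.rel_mk_iff _).2 ⟨e, ?_⟩
  simp only [subobjectFlags, IsoAction.prod_transport, Prod.mk.injEq, Conflation.ext_iff,
    Conflation.midAction_transport_infl, Conflation.midAction_transport_defl,
    Conflation.kerAction_transport_infl, Conflation.kerAction_transport_defl]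
  dsimp only at h₁ h₂ h₁' h₂'
  refine ⟨⟨?_, ?_⟩, by simp [← he], h₃.symm.trans h₃'⟩
  · rw [← cancel_mono d''.infl, Category.assoc, he, ← h₁, h₁']
  · rw [← cancel_mono c.infl, Category.assoc, ← h₂, ← he, Category.assoc, Iso.inv_hom_id_assoc,
      h₂']

lemma FlagsCorrespond.unique_quotientFlag {u u' : Σ B, Conflation E C B A × Conflation E D X B}
    {v : Σ B, Conflation E D B C × Conflation E B X A} (h : FlagsCorrespond u v)
    (h' : FlagsCorrespond u' v) : (quotientFlags E A C D X).Rel u u' := by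
  obtain ⟨B, c, d⟩ := u
  obtain ⟨B', c', d'⟩ := u'
  obtain ⟨B'', a, b⟩ := v
  obtain ⟨h₁, h₂, h₃⟩ := h
  obtain ⟨h₁', h₂', h₃'⟩ := h'
  dsimp only at h₁ h₂ h₃ h₁' h₂' h₃'
  have := E.epi_defl a.conf
  have := E.epi_defl d'.conf
  obtain ⟨e, he⟩ := E.defl_unique d.conf (h₁.trans h₁'.symm ▸ d'.conf)
  refine (IsoAction.rel_mk_iff _).2 ⟨e, ?_⟩
  simp only [quotientFlags, IsoAction.prod_transport, Prod.mk.injEq, Conflation.ext_iff,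
    Conflation.midAction_transport_infl, Conflation.midAction_transport_defl,
    Conflation.cokerAction_transport_infl, Conflation.cokerAction_transport_defl]
  refine ⟨⟨?_, ?_⟩, h₁.trans h₁'.symm, he⟩
  · rw [← cancel_epi a.defl, ← reassoc_of% h₂, he, h₂']
  · rw [← cancel_epi d'.defl, h₃', ← he, Category.assoc, Iso.hom_inv_id_assoc, h₃]

variable (E A C D X) in
/-- Noether's isomorphism `(X / D) / (Y / D) ≅ X / Y` matches the two descriptions of the
filtrations `D ⊆ Y ⊆ X`. -/
noncomputable def quotientFlagsEquivSubobjectFlags :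
    (quotientFlags E A C D X).Classes ≃ (subobjectFlags E A C D X).Classes :=
  Quotient.equivOfRel FlagsCorrespond FlagsCorrespond.exists_subobjectFlag
    FlagsCorrespond.exists_quotientFlag FlagsCorrespond.of_quotientFlags_rel
    FlagsCorrespond.of_subobjectFlags_rel FlagsCorrespond.unique_subobjectFlag
    FlagsCorrespond.unique_quotientFlag

end Noether

section HallAlgebra

variable {𝒞 : Type u} [Category.{v} 𝒞] [Preadditive 𝒞] [HasZeroObject 𝒞] [HasBinaryBiproducts 𝒞]
  (E : ExactStructure 𝒞)

section HomFinite

variable [∀ X Y : 𝒞, Finite (X ⟶ Y)]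

lemma hallCoeff_congr {A A' C C' B B' : 𝒞} (eA : A ≅ A') (eC : C ≅ C') (eB : B ≅ B') :
    hallCoeff E A C B = hallCoeff E A' C' B' := by
  rw [hallCoeff_eq_card_div_card_aut, hallCoeff_eq_card_div_card_aut,
    Nat.card_congr (Conflation.congr eC eB eA), Nat.card_congr (Aut.autMulEquivOfIso eB).toEquiv]

lemma hallCoeff_ne_zero {A C B : 𝒞} (h : Nonempty (Conflation E C B A)) :
    hallCoeff E A C B ≠ 0 := by
  rw [hallCoeff_eq_card_div_card_aut]
  exact div_ne_zero (Nat.cast_ne_zero.2 Nat.card_pos.ne') (Nat.cast_ne_zero.2 Nat.card_pos.ne')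

lemma sum_hallCoeff_mul_hallCoeff_eq_card_quotientFlags (A C D X : 𝒞) (T : Finset (IsoCl 𝒞))
    (hT : ∀ β : IsoCl 𝒞, Nonempty (Conflation E C (Quotient.out β) A) → β ∈ T) :
    ∑ β ∈ T, hallCoeff E A C (Quotient.out β) * hallCoeff E (Quotient.out β) D X =
      Nat.card (quotientFlags E A C D X).Classes / Nat.card (Aut X) := by
  rw [IsoAction.card_classes (quotientFlags E A C D X) (Conflation.cokerAction_isFree E D X).prod T
    fun β ⟨x⟩ => hT β ⟨x.1⟩, Finset.sum_div]
  refine Finset.sum_congr rfl fun β _ => ?_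
  rw [hallCoeff_eq_card_div_card_aut, hallCoeff_eq_card_div_card_aut, Nat.card_prod]
  push_cast
  ring

lemma sum_hallCoeff_mul_hallCoeff_eq_card_subobjectFlags (A C D X : 𝒞) (T : Finset (IsoCl 𝒞))
    (hT : ∀ β : IsoCl 𝒞, Nonempty (Conflation E D (Quotient.out β) C) → β ∈ T) :
    ∑ β ∈ T, hallCoeff E C D (Quotient.out β) * hallCoeff E A (Quotient.out β) X =
      Nat.card (subobjectFlags E A C D X).Classes / Nat.card (Aut X) := by
  rw [IsoAction.card_classes (subobjectFlags E A C D X) (Conflation.kerAction_isFree E X A).prod T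
    fun β ⟨x⟩ => hT β ⟨x.1⟩, Finset.sum_div]
  refine Finset.sum_congr rfl fun β _ => ?_
  rw [hallCoeff_eq_card_div_card_aut, hallCoeff_eq_card_div_card_aut, Nat.card_prod]
  push_cast
  ring

end HomFinite

section ExtFinite

variable [∀ X Y : 𝒞, Finite (Ext1 E X Y)]

lemma hallCoeff_support_finite (A C : 𝒞) :
    (Function.support fun β : IsoCl 𝒞 => hallCoeff E A C (Quotient.out β)).Finite := by
  have : Finite (Conflation.midAction E C A).Classes := .of_equiv _ (ext1EquivClasses E A C)
  refine (Set.finite_range (Conflation.midAction E C A).base).subset fun β hβ => ?_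
  have : ext1CardWith E A C (Quotient.out β) ≠ 0 := fun h => hβ (by simp [hallCoeff, h])
  rw [ext1CardWith_eq_card_fiber, skel_out] at this
  obtain ⟨⟨c, hc⟩⟩ := (Nat.card_ne_zero.1 this).1
  exact ⟨c, hc⟩

/-- The Hall product `[A] ⋄ [C]` of two basis vectors. -/
noncomputable def hallProduct (A C : 𝒞) : IsoCl 𝒞 →₀ ℚ :=
  Finsupp.ofSupportFinite _ (hallCoeff_support_finite E A C)

lemma hallProduct_apply (A C : 𝒞) (β : IsoCl 𝒞) :
    hallProduct E A C β = hallCoeff E A C (Quotient.out β) := rfl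

noncomputable def hallBilin : (IsoCl 𝒞 →₀ ℚ) →ₗ[ℚ] (IsoCl 𝒞 →₀ ℚ) →ₗ[ℚ] (IsoCl 𝒞 →₀ ℚ) :=
  Finsupp.linearCombination ℚ fun α =>
    Finsupp.linearCombination ℚ fun γ => hallProduct E (Quotient.out α) (Quotient.out γ)

lemma hallBilin_apply_single (f : IsoCl 𝒞 →₀ ℚ) (γ : IsoCl 𝒞) :
    hallBilin E f (Finsupp.single γ 1) =
      f.sum fun α r => r • hallProduct E (Quotient.out α) (Quotient.out γ) := by
  simp [hallBilin, Finsupp.linearCombination_apply, Finsupp.sum, LinearMap.sum_apply]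

lemma hallBilin_single_apply (α : IsoCl 𝒞) (g : IsoCl 𝒞 →₀ ℚ) :
    hallBilin E (Finsupp.single α 1) g =
      g.sum fun γ r => r • hallProduct E (Quotient.out α) (Quotient.out γ) := by
  simp [hallBilin, Finsupp.linearCombination_apply]

lemma hallBilin_single_single (α γ : IsoCl 𝒞) :
    hallBilin E (Finsupp.single α 1) (Finsupp.single γ 1) =
      hallProduct E (Quotient.out α) (Quotient.out γ) := by
  simp [hallBilin]

lemma hallProduct_zero_left (C : 𝒞) : hallProduct E 0 C = hallBasis C := by
  classical
  ext β
  have hiso : Nonempty (C ≅ Quotient.out β) ↔ skel C = β := by rw [← skel_eq_skel_iff, skel_out]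
  rw [hallProduct_apply, hallCoeff, ext1CardWith_zero_left, Nat.card_unique, hallBasis,
    Finsupp.single_apply]
  by_cases h : skel C = β <;> simp [h, hiso]

lemma hallProduct_zero_right (A : 𝒞) : hallProduct E A 0 = hallBasis A := by
  classical
  ext β
  have hiso : Nonempty (A ≅ Quotient.out β) ↔ skel A = β := by rw [← skel_eq_skel_iff, skel_out]
  rw [hallProduct_apply, hallCoeff, ext1CardWith_zero_right, Nat.card_unique, hallBasis,
    Finsupp.single_apply]
  by_cases h : skel A = β <;> simp [h, hiso]

section HomFinite

variable [∀ X Y : 𝒞, Finite (X ⟶ Y)]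

lemma hallProduct_congr {A A' C C' : 𝒞} (eA : A ≅ A') (eC : C ≅ C') :
    hallProduct E A C = hallProduct E A' C' :=
  Finsupp.ext fun _ => hallCoeff_congr E eA eC (Iso.refl _)

lemma hallBilin_hallBasis_zero_left : hallBilin E (hallBasis 0) = LinearMap.id := by
  obtain ⟨e⟩ := skel_eq_skel_iff.1 (skel_out (skel (0 : 𝒞)))
  refine Finsupp.basisSingleOne.ext fun γ => ?_
  rw [Finsupp.coe_basisSingleOne, hallBasis, hallBilin_single_single, hallProduct_congr E e
    (Iso.refl _), hallProduct_zero_left, hallBasis, skel_out, LinearMap.id_apply]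

lemma hallBilin_hallBasis_zero_right : (hallBilin E).flip (hallBasis 0) = LinearMap.id := by
  obtain ⟨e⟩ := skel_eq_skel_iff.1 (skel_out (skel (0 : 𝒞)))
  refine Finsupp.basisSingleOne.ext fun γ => ?_
  rw [Finsupp.coe_basisSingleOne, hallBasis, LinearMap.flip_apply, hallBilin_single_single,
    hallProduct_congr E (Iso.refl _) e, hallProduct_zero_right, hallBasis, skel_out,
    LinearMap.id_apply]

lemma hallBilin_hallBasis_apply (A C B : 𝒞) :
    hallBilin E (hallBasis A) (hallBasis C) (skel B) = hallCoeff E A C B := by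
  obtain ⟨eA⟩ := skel_eq_skel_iff.1 (skel_out (skel A))
  obtain ⟨eC⟩ := skel_eq_skel_iff.1 (skel_out (skel C))
  obtain ⟨eB⟩ := skel_eq_skel_iff.1 (skel_out (skel B))
  rw [hallBasis, hallBasis, hallBilin_single_single, hallProduct_apply]
  exact hallCoeff_congr E eA eC eB

lemma hallBilin_assoc_single (α γ δ : IsoCl 𝒞) :
    hallBilin E (hallBilin E (Finsupp.single α 1) (Finsupp.single γ 1)) (Finsupp.single δ 1) =
      hallBilin E (Finsupp.single α 1) (hallBilin E (Finsupp.single γ 1) (Finsupp.single δ 1)) := by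
  ext ξ
  rw [hallBilin_single_single, hallBilin_single_single, hallBilin_apply_single,
    hallBilin_single_apply, Finsupp.sum_apply, Finsupp.sum_apply, Finsupp.sum, Finsupp.sum]
  simp only [Finsupp.smul_apply, smul_eq_mul, hallProduct_apply]
  rw [sum_hallCoeff_mul_hallCoeff_eq_card_quotientFlags E _ _ _ _ _
      fun β h => Finsupp.mem_support_iff.2 (hallCoeff_ne_zero E h),
    sum_hallCoeff_mul_hallCoeff_eq_card_subobjectFlags E _ _ _ _ _
      fun β h => Finsupp.mem_support_iff.2 (hallCoeff_ne_zero E h),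
    Nat.card_congr (quotientFlagsEquivSubobjectFlags E _ _ _ _)]

end HomFinite

end ExtFinite

end HallAlgebra

theorem hall_algebra_associative_unital_general
    {𝒞 : Type u} [Category.{v} 𝒞] [Preadditive 𝒞]
    [HasZeroObject 𝒞] [HasBinaryBiproducts 𝒞]
    (E : ExactStructure 𝒞)
    (homFin : ∀ A B : 𝒞, Finite (A ⟶ B))
    (extFin : ∀ A B : 𝒞, Finite (Ext1 E A B)) :
    ∃ hm : HallMul E,
      (∀ x y z, hm.mul (hm.mul x y) z = hm.mul x (hm.mul y z)) ∧
      (∀ x, hm.mul (hallBasis (0 : 𝒞)) x = x) ∧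
      (∀ x, hm.mul x (hallBasis (0 : 𝒞)) = x) := by
  have := homFin
  have := extFin
  exact ⟨⟨hallBilin E, hallBilin_hallBasis_apply E⟩,
    Finsupp.bilin_assoc_of_single _ (hallBilin_assoc_single E),
    LinearMap.congr_fun (hallBilin_hallBasis_zero_left E),
    LinearMap.congr_fun (hallBilin_hallBasis_zero_right E)⟩

/-- Ringel, Hubery.  Let `E` be an essentially small exact category, linear
over a finite field `k`, with finite `Hom`- and `Ext¹`-spaces.  Then the Hall algebra `H(E)`
— the `ℚ`-vector space with basis the isomorphism classes of objects of `E`, equipped with the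
(unique) bilinear multiplication with structure constants
`[A] ⋄ [C] = ∑_B (|Ext¹(A,C)_B| / |Hom(A,C)|) [B]` — is associative and unital, with unit the
class `[0]` of the zero object. -/
theorem hall_algebra_associative_unital
    {k : Type} [Field k] [Finite k]
    {𝒞 : Type u} [Category.{v} 𝒞] [Preadditive 𝒞] [CategoryTheory.Linear k 𝒞]
    [HasZeroObject 𝒞] [HasBinaryBiproducts 𝒞] [EssentiallySmall.{v} 𝒞]
    (E : ExactStructure 𝒞)
    (homFin : ∀ A B : 𝒞, Finite (A ⟶ B))
    (extFin : ∀ A B : 𝒞, Finite (Ext1 E A B)) :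
    ∃ hm : HallMul E,
      (∀ x y z, hm.mul (hm.mul x y) z = hm.mul x (hm.mul y z)) ∧
      (∀ x, hm.mul (hallBasis (0 : 𝒞)) x = x) ∧
      (∀ x, hm.mul x (hallBasis (0 : 𝒞)) = x) :=
  hall_algebra_associative_unital_general E homFin extFin

end HallPaper
end

section
/- Let F be a Frobenius category which is essentially small, idempotent complete, linear over a finite field, and Hom-finite, and whose stable category F̄ is left locally homologically finite. Then the relative Euler form ⟨A,B⟩_{(F,F̄)} = (|Hom_F(A,B)| / |Hom_{F̄}(A,B)|) · Π_{i>0} |Ext^{-i}_{F̄}(A,B)|^{(-1)^{(i-1)}} descends to a well-defined biadditive map ⟨·,·⟩_{(F,F̄)} : K_0(F) × K_0(F) → Q^×; that is, for every conflation A_1 ↣ A_2 ↠ A_3 in F and every object B, one has ⟨A_2,B⟩_{(F,F̄)} = ⟨A_1,B⟩_{(F,F̄)} · ⟨A_3,B⟩_{(F,F̄)} and ⟨B,A_2⟩_{(F,F̄)} = ⟨B,A_1⟩_{(F,F̄)} · ⟨B,A_3⟩_{(F,F̄)}. -/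
/-!
Common definitions for formalizing "semi-derived Hall algebras" (Gorsky, arXiv:1409.6798):
Quillen exact structures, Frobenius categories, conflations and (Yoneda-style) `Ext`-sets,
Hall algebra structure constants, stable categories, suspension/syzygy data,
Grothendieck groups, and localizations of Hall algebras.
-/

open CategoryTheory CategoryTheory.Limits ZeroObject

universe w v u v' u'

namespace HallPaper

/-!
A conflation `A₁ ↣ A₂ ↠ A₃` gives the left exact sequence `0 → Hom(A₃, B) → Hom(A₂, B) →
Hom(A₁, B)` and, by rotating it repeatedly (`A₂ ↣ C ↠ ΣA₁` with `C` stably isomorphic to `A₃`),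
the long exact sequence `⋯ → Hom_F̄(ΣA₁, B) → Hom_F̄(A₃, B) → Hom_F̄(A₂, B) → Hom_F̄(A₁, B)`,
which stops once `Hom_F̄(Σʲ A₁, B)` vanishes. Since projectives are injective, every morphism
`A₁ ⟶ B` factoring through a projective extends to `A₂`, so both sequences have the same defect:
the cokernel of `Hom_F̄(A₂, B) → Hom_F̄(A₁, B)`. Comparing the alternating products of
cardinalities gives `⟨A₂, B⟩ = ⟨A₁, B⟩ ⟨A₃, B⟩`. In the second variable the long exact sequence
`⋯ → Hom_F̄(ΣB, A₃) → Hom_F̄(B, A₁) → Hom_F̄(B, A₂) → Hom_F̄(B, A₃)` comes from connecting maps.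
-/

section RelativeEuler

variable {𝒞 : Type u} [Category.{v} 𝒞] [Preadditive 𝒞] [HasZeroObject 𝒞] [HasBinaryBiproducts 𝒞]
  {E : ExactStructure 𝒞}

section Conflations

variable {X Y Z : 𝒞} {i : X ⟶ Y} {p : Y ⟶ Z}

lemma mono_of_conf (h : E.conf i p) : Mono i :=
  mono_of_isLimit_fork (E.is_kernel h).some

lemma epi_of_conf (h : E.conf i p) : Epi p :=
  epi_of_isColimit_cofork (E.is_cokernel h).some

lemma exists_lift_of_conf (h : E.conf i p) {T : 𝒞} (f : T ⟶ Y) (hf : f ≫ p = 0) :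
    ∃ e : T ⟶ X, e ≫ i = f :=
  ⟨_, (KernelFork.IsLimit.lift' (E.is_kernel h).some f hf).2⟩

lemma exists_desc_of_conf (h : E.conf i p) {T : 𝒞} (f : Y ⟶ T) (hf : i ≫ f = 0) :
    ∃ g : Z ⟶ T, p ≫ g = f :=
  ⟨_, (CokernelCofork.IsColimit.desc' (E.is_cokernel h).some f hf).2⟩

lemma conf_of_cokernel {W : 𝒞} {q : Y ⟶ W} (h : E.conf i q) (hip : i ≫ p = 0)
    (hdesc : ∀ {T : 𝒞} (t : Y ⟶ T), i ≫ t = 0 → ∃ u : Z ⟶ T, p ≫ u = t) [Epi p] :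
    E.conf i p := by
  obtain ⟨a, ha⟩ := exists_desc_of_conf h p hip
  obtain ⟨b, hb⟩ := hdesc q (E.comp_zero h)
  have := epi_of_conf h
  have hab : a ≫ b = 𝟙 W := by rw [← cancel_epi q, reassoc_of% ha, hb, Category.comp_id]
  have hba : b ≫ a = 𝟙 Z := by rw [← cancel_epi p, reassoc_of% hb, ha, Category.comp_id]
  exact E.conf_iso (Iso.refl X) (Iso.refl Y) ⟨a, b, hab, hba⟩ h (by simp) (by simpa using ha)

end Conflations

lemma proj_zero : E.Proj (0 : 𝒞) :=
  fun _ _ _ _ _ _ _ => ⟨0, (isZero_zero 𝒞).eq_of_src _ _⟩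

lemma proj_biprod {P Q : 𝒞} (hP : E.Proj P) (hQ : E.Proj Q) : E.Proj (P ⊞ Q) := by
  intro X Y Z i p h f
  obtain ⟨g₁, hg₁⟩ := hP i p h (biprod.inl ≫ f)
  obtain ⟨g₂, hg₂⟩ := hQ i p h (biprod.inr ≫ f)
  exact ⟨biprod.desc g₁ g₂, biprod.hom_ext' _ _ (by simp [hg₁]) (by simp [hg₂])⟩

section StableHom

variable (E) in
def projIdeal (X Y : 𝒞) : AddSubgroup (X ⟶ Y) where
  carrier := {f | FactorsThruProj E f}
  zero_mem' := ⟨0, 0, 0, proj_zero, by simp⟩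
  add_mem' := by
    rintro _ _ ⟨P, u, v, hP, rfl⟩ ⟨Q, u', v', hQ, rfl⟩
    exact ⟨P ⊞ Q, biprod.lift u u', biprod.desc v v', proj_biprod hP hQ, biprod.lift_desc⟩
  neg_mem' := by
    rintro _ ⟨P, u, v, hP, rfl⟩
    exact ⟨P, u, -v, hP, Preadditive.comp_neg _ _⟩

variable {W X Y Z : 𝒞}

lemma projIdeal.comp_mem_left (a : W ⟶ X) {f : X ⟶ Y} (hf : f ∈ projIdeal E X Y) :
    a ≫ f ∈ projIdeal E W Y := by
  obtain ⟨P, u, v, hP, rfl⟩ := hf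
  exact ⟨P, a ≫ u, v, hP, Category.assoc _ _ _⟩

lemma projIdeal.comp_mem_right {f : X ⟶ Y} (b : Y ⟶ Z) (hf : f ∈ projIdeal E X Y) :
    f ≫ b ∈ projIdeal E X Z := by
  obtain ⟨P, u, v, hP, rfl⟩ := hf
  exact ⟨P, u, v ≫ b, hP, (Category.assoc _ _ _).symm⟩

variable (E) in
abbrev StHomGroup (X Y : 𝒞) : Type v := (X ⟶ Y) ⧸ projIdeal E X Y

variable (E) in
def stHomEquiv (X Y : 𝒞) : StHom E X Y ≃ StHomGroup E X Y :=
  Quot.congrRight fun f g => by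
    rw [QuotientAddGroup.leftRel_apply, ← neg_mem_iff, neg_add_eq_sub, neg_sub]
    rfl

lemma card_stHom (X Y : 𝒞) : Nat.card (StHom E X Y) = Nat.card (StHomGroup E X Y) :=
  Nat.card_congr (stHomEquiv E X Y)

lemma StHom.mk_eq_mk_iff {f g : X ⟶ Y} :
    StHom.mk E f = StHom.mk E g ↔ f - g ∈ projIdeal E X Y := by
  rw [← (stHomEquiv E X Y).injective.eq_iff, ← QuotientAddGroup.eq_iff_sub_mem]
  rfl

instance [Finite (X ⟶ Y)] : Finite (StHom E X Y) := Quot.finite _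

instance : Nonempty (StHom E X Y) := ⟨StHom.mk E 0⟩

namespace StHomGroup

variable (E) in
def precomp (a : W ⟶ X) (Y : 𝒞) : StHomGroup E X Y →+ StHomGroup E W Y :=
  QuotientAddGroup.map _ _ (Preadditive.leftComp Y a) fun _ => projIdeal.comp_mem_left a

variable (E) in
def postcomp (W : 𝒞) (b : X ⟶ Y) : StHomGroup E W X →+ StHomGroup E W Y :=
  QuotientAddGroup.map _ _ (Preadditive.rightComp W b) fun _ => projIdeal.comp_mem_right b

@[simp]
lemma precomp_mk (a : W ⟶ X) (f : X ⟶ Y) :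
    precomp E a Y (f : StHomGroup E X Y) = (a ≫ f : W ⟶ Y) := rfl

@[simp]
lemma postcomp_mk (f : W ⟶ X) (b : X ⟶ Y) :
    postcomp E W b (f : StHomGroup E W X) = (f ≫ b : W ⟶ Y) := rfl

lemma precomp_comp {V : 𝒞} (a : V ⟶ W) (b : W ⟶ X) (Y : 𝒞) :
    precomp E (a ≫ b) Y = (precomp E a Y).comp (precomp E b Y) := by
  ext f
  simp

lemma precomp_apply_of_sub_id_mem {a : X ⟶ X} (ha : a - 𝟙 X ∈ projIdeal E X X)
    (x : StHomGroup E X Y) : precomp E a Y x = x := by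
  induction x using QuotientAddGroup.induction_on with | H f => ?_
  rw [precomp_mk, QuotientAddGroup.eq_iff_sub_mem]
  simpa [Preadditive.sub_comp] using projIdeal.comp_mem_right f ha

end StHomGroup

end StableHom

section Exactness

open Preadditive StHomGroup

variable {X Y Z : 𝒞} {i : X ⟶ Y} {p : Y ⟶ Z}

lemma leftComp_injective_of_conf (h : E.conf i p) (B : 𝒞) :
    Function.Injective (leftComp B p) :=
  have := epi_of_conf h
  fun _ _ => (cancel_epi p).1

lemma rightComp_injective_of_conf (h : E.conf i p) (B : 𝒞) :
    Function.Injective (rightComp B i) :=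
  have := mono_of_conf h
  fun _ _ => (cancel_mono i).1

lemma ker_leftComp_of_conf (h : E.conf i p) (B : 𝒞) :
    (leftComp B i).ker = (leftComp B p).range := by
  ext f
  refine ⟨fun hf => exists_desc_of_conf h f hf, ?_⟩
  rintro ⟨g, rfl⟩
  simp [leftComp, reassoc_of% (E.comp_zero h)]

lemma ker_rightComp_of_conf (h : E.conf i p) (B : 𝒞) :
    (rightComp B p).ker = (rightComp B i).range := by
  ext f
  refine ⟨fun hf => exists_lift_of_conf h f hf, ?_⟩
  rintro ⟨e, rfl⟩
  simp [rightComp, E.comp_zero h]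

lemma projIdeal_le_range_leftComp (hpi : ∀ P : 𝒞, E.Proj P → E.Inj P) (h : E.conf i p)
    (B : 𝒞) : projIdeal E X B ≤ (leftComp B i).range := by
  rintro _ ⟨P, u, v, hP, rfl⟩
  obtain ⟨w, hw⟩ := hpi P hP i p h u
  exact ⟨w ≫ v, by simp [leftComp, reassoc_of% hw]⟩

lemma projIdeal_le_range_rightComp (h : E.conf i p) (B : 𝒞) :
    projIdeal E B Z ≤ (rightComp B p).range := by
  rintro _ ⟨Q, u, v, hQ, rfl⟩
  obtain ⟨w, hw⟩ := hQ i p h v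
  exact ⟨u ≫ w, by simp [rightComp, hw]⟩

lemma ker_precomp_of_conf (hpi : ∀ P : 𝒞, E.Proj P → E.Inj P) (h : E.conf i p) (B : 𝒞) :
    (precomp E i B).ker = (precomp E p B).range := by
  refine le_antisymm (fun x hx => ?_) ?_
  · induction x using QuotientAddGroup.induction_on with | H f => ?_
    obtain ⟨P, u, v, hP, huv⟩ := (QuotientAddGroup.eq_zero_iff _).1 hx
    obtain ⟨w, hw⟩ := hpi P hP i p h u
    obtain ⟨g, hg⟩ := exists_desc_of_conf h (f - w ≫ v)
      (by rw [Preadditive.comp_sub, reassoc_of% hw, huv]; exact sub_self _)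
    exact ⟨g, (QuotientAddGroup.eq_iff_sub_mem).2 ⟨P, w, -v, hP, by simp [leftComp, hg]⟩⟩
  · rintro _ ⟨x, rfl⟩
    induction x using QuotientAddGroup.induction_on with | H g => ?_
    simp [AddMonoidHom.mem_ker, reassoc_of% (E.comp_zero h)]

lemma ker_postcomp_of_conf (h : E.conf i p) (B : 𝒞) :
    (postcomp E B p).ker = (postcomp E B i).range := by
  refine le_antisymm (fun x hx => ?_) ?_
  · induction x using QuotientAddGroup.induction_on with | H f => ?_
    obtain ⟨Q, u, v, hQ, huv⟩ := (QuotientAddGroup.eq_zero_iff _).1 hx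
    obtain ⟨w, hw⟩ := hQ i p h v
    obtain ⟨e, he⟩ := exists_lift_of_conf h (f - u ≫ w)
      (by rw [Preadditive.sub_comp, Category.assoc, hw, huv]; exact sub_self _)
    exact ⟨e, (QuotientAddGroup.eq_iff_sub_mem).2 ⟨Q, u, -w, hQ, by simp [rightComp, he]⟩⟩
  · rintro _ ⟨x, rfl⟩
    induction x using QuotientAddGroup.induction_on with | H e => ?_
    simp [AddMonoidHom.mem_ker, E.comp_zero h]

end Exactness

section StableIso

variable {X Y Z : 𝒞}

lemma stIso_iff : StIso E X Y ↔ ∃ (f : X ⟶ Y) (g : Y ⟶ X),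
    f ≫ g - 𝟙 X ∈ projIdeal E X X ∧ g ≫ f - 𝟙 Y ∈ projIdeal E Y Y := by
  simp only [StIso, StHom.mk_eq_mk_iff]

lemma StIso.refl (X : 𝒞) : StIso E X X :=
  ⟨𝟙 X, 𝟙 X, by simp, by simp⟩

lemma StIso.trans (h : StIso E X Y) (h' : StIso E Y Z) : StIso E X Z := by
  obtain ⟨f, g, hfg, hgf⟩ := stIso_iff.1 h
  obtain ⟨f', g', hfg', hgf'⟩ := stIso_iff.1 h'
  refine stIso_iff.2 ⟨f ≫ f', g' ≫ g, ?_, ?_⟩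
  · convert add_mem (projIdeal.comp_mem_left f (projIdeal.comp_mem_right g hfg')) hfg using 1
    simp [Preadditive.comp_sub, Preadditive.sub_comp]
  · convert add_mem (projIdeal.comp_mem_left g' (projIdeal.comp_mem_right f' hgf)) hgf' using 1
    simp [Preadditive.comp_sub, Preadditive.sub_comp]

lemma card_stHom_eq_of_stIso (h : StIso E X Y) (B : 𝒞) :
    Nat.card (StHom E X B) = Nat.card (StHom E Y B) := by
  obtain ⟨f, g, hfg, hgf⟩ := stIso_iff.1 h
  rw [card_stHom, card_stHom]
  refine Nat.card_congr ⟨StHomGroup.precomp E g B, StHomGroup.precomp E f B, fun x => ?_,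
    fun x => ?_⟩
  · rw [← AddMonoidHom.comp_apply, ← StHomGroup.precomp_comp,
      StHomGroup.precomp_apply_of_sub_id_mem hfg]
  · rw [← AddMonoidHom.comp_apply, ← StHomGroup.precomp_comp,
      StHomGroup.precomp_apply_of_sub_id_mem hgf]

lemma mem_projIdeal_of_comm (hpi : ∀ P : 𝒞, E.Proj P → E.Inj P)
    {X' I I' S S' : 𝒞} {j : X ⟶ I} {q : I ⟶ S} {j' : X' ⟶ I'} {q' : I' ⟶ S'}
    (hjq : E.conf j q) (hjq' : j' ≫ q' = 0) (hI' : E.Proj I')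
    {f : X ⟶ X'} {φ : I ⟶ I'} {Φ : S ⟶ S'} (hφ : j ≫ φ = f ≫ j') (hΦ : q ≫ Φ = φ ≫ q')
    (hf : f ∈ projIdeal E X X') : Φ ∈ projIdeal E S S' := by
  obtain ⟨Q, a, b, hQ, rfl⟩ := hf
  obtain ⟨α, hα⟩ := hpi Q hQ j q hjq a
  obtain ⟨l, hl⟩ := exists_desc_of_conf hjq (φ - α ≫ b ≫ j') (by simp [reassoc_of% hα, hφ])
  have := epi_of_conf hjq
  refine ⟨I', l, q', hI', (cancel_epi q).1 ?_⟩
  rw [reassoc_of% hl, hΦ, Preadditive.sub_comp]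
  simp [hjq']

lemma StIso.susp (hpi : ∀ P : 𝒞, E.Proj P → E.Inj P) (Sd : SuspData E) (h : StIso E X Y) :
    StIso E (Sd.S X) (Sd.S Y) := by
  obtain ⟨f, g, hfg, hgf⟩ := stIso_iff.1 h
  obtain ⟨φ, hφ⟩ := hpi _ (Sd.proj Y) _ _ (Sd.isConf X) (f ≫ Sd.ins Y)
  obtain ⟨ψ, hψ⟩ := hpi _ (Sd.proj X) _ _ (Sd.isConf Y) (g ≫ Sd.ins X)
  obtain ⟨Φ, hΦ⟩ := exists_desc_of_conf (Sd.isConf X) (φ ≫ Sd.out Y)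
    (by simp [reassoc_of% hφ, E.comp_zero (Sd.isConf Y)])
  obtain ⟨Ψ, hΨ⟩ := exists_desc_of_conf (Sd.isConf Y) (ψ ≫ Sd.out X)
    (by simp [reassoc_of% hψ, E.comp_zero (Sd.isConf X)])
  refine stIso_iff.2 ⟨Φ, Ψ, mem_projIdeal_of_comm hpi (Sd.isConf X) (E.comp_zero (Sd.isConf X))
    (Sd.proj X) (φ := φ ≫ ψ - 𝟙 _) ?_ ?_ hfg, mem_projIdeal_of_comm hpi (Sd.isConf Y)
    (E.comp_zero (Sd.isConf Y)) (Sd.proj Y) (φ := ψ ≫ φ - 𝟙 _) ?_ ?_ hgf⟩ <;>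
  simp [Preadditive.comp_sub, Preadditive.sub_comp, reassoc_of% hφ, reassoc_of% hψ,
    reassoc_of% hΦ, reassoc_of% hΨ, hφ, hψ, hΦ, hΨ]

end StableIso

section Rotation

variable (E) in
structure Conflation_s11 where
  X : 𝒞
  Y : 𝒞
  Z : 𝒞
  i : X ⟶ Y
  p : Y ⟶ Z
  conf : E.conf i p

/-- A rotation `Y ↣ C ↠ ΣX` of the conflation `X ↣ Y ↠ Z`, together with a stable isomorphism
`C ≅ Z` through which `p` factors. -/
structure Conflation_s11.Rotation (Sd : SuspData E) (c : Conflation_s11 E) where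
  C : 𝒞
  inl : c.Y ⟶ C
  r : C ⟶ Sd.S c.X
  conf : E.conf inl r
  toZ : C ⟶ c.Z
  ofZ : c.Z ⟶ C
  inl_toZ : inl ≫ toZ = c.p
  ofZ_toZ : ofZ ≫ toZ = 𝟙 c.Z
  toZ_ofZ_sub : toZ ≫ ofZ - 𝟙 C ∈ projIdeal E C C

lemma Conflation_s11.nonempty_rotation (hpi : ∀ P : 𝒞, E.Proj P → E.Inj P) (Sd : SuspData E)
    (c : Conflation_s11 E) : Nonempty (c.Rotation Sd) := by
  obtain ⟨X, Y, Z, i, p, h⟩ := c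
  -- `C` is the pushout of `X ↣ I X` along `i`, with injections `g : I X ⟶ C` and `inl : Y ⟶ C`
  obtain ⟨C, inl, g, hpo, _, _, hinl⟩ := E.pushout_infl (Sd.isConf X) i
  obtain ⟨t, ht⟩ := hpi _ (Sd.proj X) i p h (Sd.ins X)
  let r : C ⟶ Sd.S X := hpo.desc (Sd.out X) 0 (by simp [E.comp_zero (Sd.isConf X)])
  let toZ : C ⟶ Z := hpo.desc 0 p (by simp [E.comp_zero h])
  let retr : C ⟶ Sd.I X := hpo.desc (𝟙 _) t (by simp [ht])
  obtain ⟨ofZ, hofZ⟩ := exists_desc_of_conf h (inl - t ≫ g) (by simp [reassoc_of% ht, hpo.w])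
  have := epi_of_conf h
  have := epi_of_conf (Sd.isConf X)
  have hgr : g ≫ r = Sd.out X := hpo.inl_desc _ _ _
  have : Epi r := ⟨fun u u' huu => (cancel_epi (Sd.out X)).1 (by
    rw [← hgr, Category.assoc, Category.assoc, huu])⟩
  have hconf : E.conf inl r := by
    refine conf_of_cokernel hinl (hpo.inr_desc _ _ _) fun u hu => ?_
    obtain ⟨v, hv⟩ := exists_desc_of_conf (Sd.isConf X) (g ≫ u)
      (by rw [reassoc_of% hpo.w, hu, comp_zero])
    exact ⟨v, hpo.hom_ext (by rw [reassoc_of% hgr, hv]) (by simp [r, hu])⟩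
  refine ⟨⟨C, inl, r, hconf, toZ, ofZ, hpo.inr_desc _ _ _, ?_, ?_⟩⟩
  · rw [← cancel_epi p, reassoc_of% hofZ]
    simp [toZ]
  · refine ⟨Sd.I X, -retr, g, Sd.proj X, hpo.hom_ext ?_ ?_⟩
    · simp [toZ, retr]
    · simp [toZ, retr, hofZ]

lemma Conflation_s11.Rotation.stIso {Sd : SuspData E} {c : Conflation_s11 E} (R : c.Rotation Sd) :
    StIso E R.C c.Z :=
  stIso_iff.2 ⟨R.toZ, R.ofZ, R.toZ_ofZ_sub, by simp [R.ofZ_toZ]⟩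

lemma Conflation_s11.Rotation.range_precomp_inl {Sd : SuspData E} {c : Conflation_s11 E}
    (R : c.Rotation Sd) (B : 𝒞) :
    (StHomGroup.precomp E R.inl B).range = (StHomGroup.precomp E c.p B).range := by
  have hsurj : Function.Surjective (StHomGroup.precomp E R.toZ B) := fun x =>
    ⟨StHomGroup.precomp E R.ofZ B x, by
      rw [← AddMonoidHom.comp_apply, ← StHomGroup.precomp_comp,
        StHomGroup.precomp_apply_of_sub_id_mem R.toZ_ofZ_sub]⟩
  rw [← R.inl_toZ, StHomGroup.precomp_comp, AddMonoidHom.range_comp,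
    AddMonoidHom.range_eq_top.2 hsurj, ← AddMonoidHom.range_eq_map]

variable (hpi : ∀ P : 𝒞, E.Proj P → E.Inj P) (Sd : SuspData E)

noncomputable def Conflation_s11.rotate (c : Conflation_s11 E) : c.Rotation Sd :=
  (c.nonempty_rotation hpi Sd).some

noncomputable def Conflation_s11.rotations (c : Conflation_s11 E) : ℕ → Conflation_s11 E
  | 0 => c
  | n + 1 =>
    let R := (c.rotations n).rotate hpi Sd
    ⟨(c.rotations n).Y, R.C, Sd.S (c.rotations n).X, R.inl, R.r, R.conf⟩

lemma Conflation_s11.range_precomp_rotations_succ (c : Conflation_s11 E) (B : 𝒞) (n : ℕ) :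
    (StHomGroup.precomp E (c.rotations hpi Sd (n + 1)).i B).range =
      (StHomGroup.precomp E (c.rotations hpi Sd n).i B).ker := by
  rw [ker_precomp_of_conf hpi (c.rotations hpi Sd n).conf]
  exact Conflation_s11.Rotation.range_precomp_inl _ B

lemma Conflation_s11.stIso_rotations (c : Conflation_s11 E) (m : ℕ) :
    StIso E (c.rotations hpi Sd (3 * m)).X (SIter Sd m c.X) ∧
      StIso E (c.rotations hpi Sd (3 * m + 1)).X (SIter Sd m c.Y) ∧
      StIso E (c.rotations hpi Sd (3 * m + 2)).X (SIter Sd m c.Z) := by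
  -- `(c.rotations hpi Sd (n + 1)).Z` is `Sd.S (c.rotations hpi Sd n).X` by definition
  have step (n : ℕ) : StIso E (c.rotations hpi Sd (n + 2)).X (c.rotations hpi Sd n).Z :=
    Conflation_s11.Rotation.stIso _
  induction m with
  | zero => exact ⟨StIso.refl _, StIso.refl _, step 0⟩
  | succ m ih =>
    obtain ⟨h₁, h₂, h₃⟩ := ih
    exact ⟨(step (3 * m + 1)).trans (h₁.susp hpi Sd), (step (3 * m + 2)).trans (h₂.susp hpi Sd),
      (step (3 * m + 3)).trans (h₃.susp hpi Sd)⟩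

end Rotation

section Connecting

open StHomGroup

variable {X Y Z W I V : 𝒞} {i : X ⟶ Y} {p : Y ⟶ Z} {j : W ⟶ I} {q : I ⟶ V}

omit [HasZeroObject 𝒞] [HasBinaryBiproducts 𝒞] in
variable (i p j q) in
def IsConnecting (g : V ⟶ Z) (d : W ⟶ X) : Prop :=
  ∃ L : I ⟶ Y, L ≫ p = q ≫ g ∧ d ≫ i = j ≫ L

omit [HasZeroObject 𝒞] [HasBinaryBiproducts 𝒞] in
lemma IsConnecting.add {g g' : V ⟶ Z} {d d' : W ⟶ X} (hd : IsConnecting i p j q g d)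
    (hd' : IsConnecting i p j q g' d') : IsConnecting i p j q (g + g') (d + d') := by
  obtain ⟨L, hL, hdL⟩ := hd
  obtain ⟨L', hL', hdL'⟩ := hd'
  exact ⟨L + L', by simp [hL, hL'], by simp [hdL, hdL']⟩

variable (h : E.conf i p) (hj : E.conf j q) (hI : E.Proj I)

include h hj hI in
lemma exists_isConnecting (g : V ⟶ Z) : ∃ d, IsConnecting i p j q g d := by
  obtain ⟨L, hL⟩ := hI i p h (q ≫ g)
  obtain ⟨d, hd⟩ := exists_lift_of_conf h (j ≫ L) (by simp [hL, reassoc_of% (E.comp_zero hj)])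
  exact ⟨d, L, hL, hd⟩

include h hI in
lemma IsConnecting.sub_mem {g : V ⟶ Z} {d d' : W ⟶ X} (hd : IsConnecting i p j q g d)
    (hd' : IsConnecting i p j q g d') : d - d' ∈ projIdeal E W X := by
  obtain ⟨L, hL, hdL⟩ := hd
  obtain ⟨L', hL', hdL'⟩ := hd'
  obtain ⟨m, hm⟩ := exists_lift_of_conf h (L - L') (by simp [hL, hL'])
  have := mono_of_conf h
  exact ⟨I, j, m, hI, (cancel_mono i).1 (by simp [hm, hdL, hdL'])⟩

include h hj hI in
lemma IsConnecting.mem_of_mem {g : V ⟶ Z} {d : W ⟶ X} (hd : IsConnecting i p j q g d)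
    (hg : g ∈ projIdeal E V Z) : d ∈ projIdeal E W X := by
  obtain ⟨Q, u, v, hQ, rfl⟩ := hg
  obtain ⟨w, hw⟩ := hQ i p h v
  have h0 : IsConnecting i p j q (u ≫ v) 0 :=
    ⟨q ≫ u ≫ w, by simp [hw], by simp [reassoc_of% (E.comp_zero hj)]⟩
  simpa using hd.sub_mem h hI h0

/-- For `W ↣ I W ↠ ΣW` this is the connecting map `Hom_F̄(ΣW, Z) → Hom_F̄(W, X)`. -/
noncomputable def connecting : StHomGroup E V Z →+ StHomGroup E W X :=
  QuotientAddGroup.lift _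
    (AddMonoidHom.mk' (fun g => ((exists_isConnecting h hj hI g).choose : StHomGroup E W X))
      fun g g' => (QuotientAddGroup.eq_iff_sub_mem).2 <|
        (exists_isConnecting h hj hI (g + g')).choose_spec.sub_mem h hI
          ((exists_isConnecting h hj hI g).choose_spec.add
            (exists_isConnecting h hj hI g').choose_spec))
    fun g hg => (QuotientAddGroup.eq_zero_iff _).2 <|
      (exists_isConnecting h hj hI g).choose_spec.mem_of_mem h hj hI hg

lemma connecting_mk {g : V ⟶ Z} {d : W ⟶ X} (hd : IsConnecting i p j q g d) :
    connecting h hj hI (g : StHomGroup E V Z) = d :=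
  (QuotientAddGroup.eq_iff_sub_mem).2 <|
    (exists_isConnecting h hj hI g).choose_spec.sub_mem h hI hd

lemma ker_postcomp_eq_range_connecting (hpi : ∀ P : 𝒞, E.Proj P → E.Inj P) :
    (postcomp E W i).ker = (connecting h hj hI).range := by
  refine le_antisymm (fun x hx => ?_) ?_
  · induction x using QuotientAddGroup.induction_on with | H f => ?_
    obtain ⟨Q, u, v, hQ, huv⟩ := (QuotientAddGroup.eq_zero_iff _).1 hx
    obtain ⟨u', hu'⟩ := hpi Q hQ j q hj u
    have hL : j ≫ u' ≫ v = f ≫ i := by simpa [Preadditive.rightComp, reassoc_of% hu'] using huv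
    obtain ⟨g, hg⟩ := exists_desc_of_conf hj (u' ≫ v ≫ p)
      (by simp [reassoc_of% hL, E.comp_zero h])
    exact ⟨g, connecting_mk h hj hI ⟨u' ≫ v, by simp [hg], hL.symm⟩⟩
  · rintro _ ⟨x, rfl⟩
    induction x using QuotientAddGroup.induction_on with | H g => ?_
    obtain ⟨d, L, hL, hdL⟩ := exists_isConnecting h hj hI g
    rw [AddMonoidHom.mem_ker, connecting_mk h hj hI ⟨L, hL, hdL⟩, postcomp_mk,
      QuotientAddGroup.eq_zero_iff]
    exact ⟨I, j, L, hI, hdL.symm⟩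

lemma ker_connecting (hpi : ∀ P : 𝒞, E.Proj P → E.Inj P) :
    (connecting h hj hI).ker = (postcomp E V p).range := by
  refine le_antisymm (fun x hx => ?_) ?_
  · induction x using QuotientAddGroup.induction_on with | H g => ?_
    obtain ⟨d, L, hL, hdL⟩ := exists_isConnecting h hj hI g
    rw [AddMonoidHom.mem_ker, connecting_mk h hj hI ⟨L, hL, hdL⟩,
      QuotientAddGroup.eq_zero_iff] at hx
    obtain ⟨Q, u, v, hQ, rfl⟩ := hx
    obtain ⟨u', hu'⟩ := hpi Q hQ j q hj u
    obtain ⟨k, hk⟩ := exists_desc_of_conf hj (L - u' ≫ v ≫ i)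
      (by simp [reassoc_of% hu', ← hdL])
    have := epi_of_conf hj
    refine ⟨k, congrArg _ ((cancel_epi q).1 ?_)⟩
    simp [Preadditive.rightComp, reassoc_of% hk, hL, E.comp_zero h]
  · rintro _ ⟨x, rfl⟩
    induction x using QuotientAddGroup.induction_on with | H k => ?_
    rw [AddMonoidHom.mem_ker, postcomp_mk, connecting_mk h hj hI (d := 0)
      ⟨q ≫ k, by simp, by simp [reassoc_of% (E.comp_zero hj)]⟩]
    rfl

end Connecting

section Counting

lemma prod_range_zpow_neg_one_pow_telescope {K : Type*} [Field K] {f c : ℕ → K} (x : K)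
    (hc : ∀ m, c m ≠ 0) (h0 : f 0 = x * c 0) (hsucc : ∀ m, f (m + 1) = c m * c (m + 1))
    (N : ℕ) :
    ∏ m ∈ Finset.range (N + 1), f m ^ ((-1 : ℤ) ^ m) = x * c N ^ ((-1 : ℤ) ^ N) := by
  induction N with
  | zero => simp [h0]
  | succ N ih =>
    rw [Finset.prod_range_succ, ih, hsucc, pow_succ, mul_neg_one, zpow_neg, zpow_neg, mul_zpow]
    have := zpow_ne_zero ((-1 : ℤ) ^ N) (hc N)
    field_simp

lemma card_eq_card_ker_mul_card_range {G H : Type*} [AddGroup G] [AddGroup H] (f : G →+ H) :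
    Nat.card G = Nat.card f.ker * Nat.card f.range := by
  rw [AddSubgroup.card_eq_card_quotient_mul_card_addSubgroup f.ker, mul_comm,
    Nat.card_congr (QuotientAddGroup.quotientKerEquivRange f).toEquiv]

/-- The long exact sequence is `G₁ (N+1) → G₃ N → G₂ N → G₁ N → ⋯ → G₃ 0 → G₂ 0 → G₁ 0`. -/
theorem prod_card_zpow_eq_card_coker {G₁ G₂ G₃ : ℕ → Type w} [∀ m, AddCommGroup (G₁ m)]
    [∀ m, AddCommGroup (G₂ m)] [∀ m, AddCommGroup (G₃ m)] [∀ m, Finite (G₁ m)]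
    [∀ m, Finite (G₂ m)] [∀ m, Finite (G₃ m)]
    (u : ∀ m, G₂ m →+ G₁ m) (v : ∀ m, G₃ m →+ G₂ m) (w : ∀ m, G₁ (m + 1) →+ G₃ m)
    (huv : ∀ m, (v m).range = (u m).ker) (hvw : ∀ m, (w m).range = (v m).ker)
    (hwu : ∀ m, (u (m + 1)).range = (w m).ker) (N : ℕ) [Subsingleton (G₁ (N + 1))] :
    ∏ m ∈ Finset.range (N + 1),
        ((Nat.card (G₁ m) * Nat.card (G₃ m) : ℚ) / Nat.card (G₂ m)) ^ ((-1 : ℤ) ^ m) =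
      Nat.card (G₁ 0 ⧸ (u 0).range) := by
  have pos {G : Type w} [AddGroup G] [Finite G] (S : AddSubgroup G) : (Nat.card S : ℚ) ≠ 0 :=
    Nat.cast_ne_zero.2 Nat.card_pos.ne'
  have h₁ (m : ℕ) :
      (Nat.card (G₁ (m + 1)) : ℚ) = Nat.card (u (m + 1)).range * Nat.card (w m).range := by
    rw [card_eq_card_ker_mul_card_range (w m), ← hwu]; push_cast; ring
  have h₂ (m : ℕ) : (Nat.card (G₂ m) : ℚ) = Nat.card (v m).range * Nat.card (u m).range := by
    rw [card_eq_card_ker_mul_card_range (u m), ← huv]; push_cast; ring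
  have h₃ (m : ℕ) : (Nat.card (G₃ m) : ℚ) = Nat.card (w m).range * Nat.card (v m).range := by
    rw [card_eq_card_ker_mul_card_range (v m), ← hvw]; push_cast; ring
  have htop : Nat.card (w N).range = 1 := by
    have := card_eq_card_ker_mul_card_range (w N)
    rw [Nat.card_unique] at this
    exact Nat.eq_one_of_mul_eq_one_left this.symm
  rw [prod_range_zpow_neg_one_pow_telescope (c := fun m => (Nat.card (w m).range : ℚ))
    (Nat.card (G₁ 0 ⧸ (u 0).range)) (fun m => pos _) ?_ ?_, htop]
  · simp
  · rw [h₂, h₃, AddSubgroup.card_eq_card_quotient_mul_card_addSubgroup (u 0).range]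
    have := pos (u 0).range
    have := pos (v 0).range
    push_cast
    field_simp
  · intro m
    rw [h₁, h₂, h₃]
    have := pos (u (m + 1)).range
    have := pos (v (m + 1)).range
    field_simp

lemma card_mul_card_quotient_range {K G H : Type*} [AddGroup K] [AddGroup G] [AddCommGroup H]
    {g : K →+ G} {f : G →+ H} (hg : Function.Injective g) (hgf : g.range = f.ker) :
    Nat.card G * Nat.card (H ⧸ f.range) = Nat.card K * Nat.card H := by
  rw [card_eq_card_ker_mul_card_range f, ← hgf,
    AddSubgroup.card_eq_card_quotient_mul_card_addSubgroup f.range,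
    ← Nat.card_congr (AddMonoidHom.ofInjective hg).toEquiv]
  ring

lemma card_quotient_range_map {G H : Type*} [AddCommGroup G] [AddCommGroup H] (f : G →+ H)
    {S : AddSubgroup G} {T : AddSubgroup H} (hST : S ≤ T.comap f) (hT : T ≤ f.range) :
    Nat.card ((H ⧸ T) ⧸ (QuotientAddGroup.map S T f hST).range) = Nat.card (H ⧸ f.range) := by
  have hrange : (QuotientAddGroup.map S T f hST).range = f.range.map (QuotientAddGroup.mk' T) := by
    rw [← AddMonoidHom.range_comp, AddMonoidHom.range_eq_map,
      ← AddMonoidHom.range_eq_top.2 (QuotientAddGroup.mk'_surjective S), ← AddMonoidHom.range_comp]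
    rfl
  rw [hrange]
  exact Nat.card_congr (QuotientAddGroup.quotientQuotientEquivQuotient T f.range hT).toEquiv

end Counting

section EulerForm

open Preadditive StHomGroup

variable {X Y Z : 𝒞} {i : X ⟶ Y} {p : Y ⟶ Z}

lemma card_hom_mul_card_coker_precomp (hpi : ∀ P : 𝒞, E.Proj P → E.Inj P) (h : E.conf i p)
    (B : 𝒞) :
    Nat.card (Y ⟶ B) * Nat.card (StHomGroup E X B ⧸ (precomp E i B).range) =
      Nat.card (X ⟶ B) * Nat.card (Z ⟶ B) := by
  have hcoker : Nat.card (StHomGroup E X B ⧸ (precomp E i B).range) =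
      Nat.card ((X ⟶ B) ⧸ (leftComp B i).range) :=
    card_quotient_range_map _ _ (projIdeal_le_range_leftComp hpi h B)
  rw [hcoker, card_mul_card_quotient_range (leftComp_injective_of_conf h B)
      (ker_leftComp_of_conf h B).symm, mul_comm]

lemma card_hom_mul_card_coker_postcomp (h : E.conf i p) (B : 𝒞) :
    Nat.card (B ⟶ Y) * Nat.card (StHomGroup E B Z ⧸ (postcomp E B p).range) =
      Nat.card (B ⟶ X) * Nat.card (B ⟶ Z) := by
  have hcoker : Nat.card (StHomGroup E B Z ⧸ (postcomp E B p).range) =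
      Nat.card ((B ⟶ Z) ⧸ (rightComp B p).range) :=
    card_quotient_range_map _ _ (projIdeal_le_range_rightComp h B)
  rw [hcoker, card_mul_card_quotient_range (rightComp_injective_of_conf h B)
      (ker_rightComp_of_conf h B).symm]

lemma prod_card_stHom_eq_card_coker_precomp [∀ X Y : 𝒞, Finite (X ⟶ Y)]
    (hpi : ∀ P : 𝒞, E.Proj P → E.Inj P) (Sd : SuspData E) (h : E.conf i p) (B : 𝒞) (N : ℕ)
    [Subsingleton (StHom E (SIter Sd (N + 1) X) B)] :
    ∏ m ∈ Finset.range (N + 1), ((Nat.card (StHom E (SIter Sd m X) B) *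
        Nat.card (StHom E (SIter Sd m Z) B) : ℚ) / Nat.card (StHom E (SIter Sd m Y) B)) ^
          ((-1 : ℤ) ^ m) =
      Nat.card (StHomGroup E X B ⧸ (precomp E i B).range) := by
  let c : Conflation_s11 E := ⟨X, Y, Z, i, p, h⟩
  have : Subsingleton (StHomGroup E (c.rotations hpi Sd (3 * (N + 1))).X B) := by
    rw [← Finite.card_le_one_iff_subsingleton, ← card_stHom,
      card_stHom_eq_of_stIso (c.stIso_rotations hpi Sd (N + 1)).1,
      Finite.card_le_one_iff_subsingleton]
    infer_instance
  refine (Finset.prod_congr rfl fun m _ => ?_).trans <|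
    prod_card_zpow_eq_card_coker (fun m => precomp E (c.rotations hpi Sd (3 * m)).i B)
      (fun m => precomp E (c.rotations hpi Sd (3 * m + 1)).i B)
      (fun m => precomp E (c.rotations hpi Sd (3 * m + 2)).i B)
      (fun m => c.range_precomp_rotations_succ hpi Sd B _)
      (fun m => c.range_precomp_rotations_succ hpi Sd B _)
      (fun m => c.range_precomp_rotations_succ hpi Sd B _) N
  obtain ⟨h₁, h₂, h₃⟩ := c.stIso_rotations hpi Sd m
  rw [← card_stHom_eq_of_stIso h₁, ← card_stHom_eq_of_stIso h₂, ← card_stHom_eq_of_stIso h₃,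
    card_stHom, card_stHom, card_stHom]
  rfl

lemma prod_card_stHom_eq_card_coker_postcomp [∀ X Y : 𝒞, Finite (X ⟶ Y)]
    (hpi : ∀ P : 𝒞, E.Proj P → E.Inj P) (Sd : SuspData E) (h : E.conf i p) (B : 𝒞) (N : ℕ)
    [Subsingleton (StHom E (SIter Sd (N + 1) B) Z)] :
    ∏ m ∈ Finset.range (N + 1), ((Nat.card (StHom E (SIter Sd m B) X) *
        Nat.card (StHom E (SIter Sd m B) Z) : ℚ) / Nat.card (StHom E (SIter Sd m B) Y)) ^
          ((-1 : ℤ) ^ m) =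
      Nat.card (StHomGroup E B Z ⧸ (postcomp E B p).range) := by
  have : Subsingleton (StHomGroup E (SIter Sd (N + 1) B) Z) := (stHomEquiv E _ _).symm.subsingleton
  refine (Finset.prod_congr rfl fun m _ => ?_).trans <|
    prod_card_zpow_eq_card_coker (fun m => postcomp E (SIter Sd m B) p)
      (fun m => postcomp E (SIter Sd m B) i)
      (fun m => connecting h (Sd.isConf (SIter Sd m B)) (Sd.proj _))
      (fun m => (ker_postcomp_of_conf h _).symm)
      (fun m => (ker_postcomp_eq_range_connecting h _ _ hpi).symm)
      (fun m => (ker_connecting h _ _ hpi).symm) N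
  rw [card_stHom, card_stHom, card_stHom, mul_comm]

lemma relEulerAt_eq_div (Sd : SuspData E) (N : ℕ) (A B : 𝒞) :
    relEulerAt Sd N A B = Nat.card (A ⟶ B) /
      ∏ m ∈ Finset.range (N + 1), (Nat.card (StHom E (SIter Sd m A) B) : ℚ) ^ ((-1 : ℤ) ^ m) := by
  rw [relEulerAt, Finset.prod_range_succ']
  simp only [pow_succ, mul_neg_one, zpow_neg, Finset.prod_inv_distrib, pow_zero, zpow_one, SIter]
  simp only [div_eq_mul_inv, mul_inv, inv_inv]
  ring

lemma relEulerAt_mul_of_card [∀ X Y : 𝒞, Finite (X ⟶ Y)] (Sd : SuspData E) (N : ℕ)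
    {A₁ A₂ A₃ B₁ B₂ B₃ : 𝒞} (c : ℕ)
    (hhom : Nat.card (A₂ ⟶ B₂) * c = Nat.card (A₁ ⟶ B₁) * Nat.card (A₃ ⟶ B₃))
    (hst : ∏ m ∈ Finset.range (N + 1), ((Nat.card (StHom E (SIter Sd m A₁) B₁) *
        Nat.card (StHom E (SIter Sd m A₃) B₃) : ℚ) / Nat.card (StHom E (SIter Sd m A₂) B₂)) ^
          ((-1 : ℤ) ^ m) = c) :
    relEulerAt Sd N A₂ B₂ = relEulerAt Sd N A₁ B₁ * relEulerAt Sd N A₃ B₃ := by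
  have hP (A B : 𝒞) : ∏ m ∈ Finset.range (N + 1),
      (Nat.card (StHom E (SIter Sd m A) B) : ℚ) ^ ((-1 : ℤ) ^ m) ≠ 0 :=
    Finset.prod_ne_zero_iff.2 fun m _ => zpow_ne_zero _ (Nat.cast_ne_zero.2 Nat.card_pos.ne')
  simp only [div_zpow, mul_zpow, Finset.prod_div_distrib, Finset.prod_mul_distrib] at hst
  rw [div_eq_iff (hP A₂ B₂)] at hst
  have hhom' : (Nat.card (A₂ ⟶ B₂) * c : ℚ) = Nat.card (A₁ ⟶ B₁) * Nat.card (A₃ ⟶ B₃) := by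
    exact_mod_cast hhom
  rw [relEulerAt_eq_div, relEulerAt_eq_div, relEulerAt_eq_div, div_mul_div_comm,
    div_eq_div_iff (hP A₂ B₂) (mul_ne_zero (hP A₁ B₁) (hP A₃ B₃)), hst, ← hhom']
  ring

theorem relEulerAt_mul_of_conf_left [∀ X Y : 𝒞, Finite (X ⟶ Y)]
    (hpi : ∀ P : 𝒞, E.Proj P → E.Inj P) (Sd : SuspData E) (h : E.conf i p) (B : 𝒞) (N : ℕ)
    [Subsingleton (StHom E (SIter Sd (N + 1) X) B)] :
    relEulerAt Sd N Y B = relEulerAt Sd N X B * relEulerAt Sd N Z B :=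
  relEulerAt_mul_of_card Sd N _ (card_hom_mul_card_coker_precomp hpi h B)
    (prod_card_stHom_eq_card_coker_precomp hpi Sd h B N)

theorem relEulerAt_mul_of_conf_right [∀ X Y : 𝒞, Finite (X ⟶ Y)]
    (hpi : ∀ P : 𝒞, E.Proj P → E.Inj P) (Sd : SuspData E) (h : E.conf i p) (B : 𝒞) (N : ℕ)
    [Subsingleton (StHom E (SIter Sd (N + 1) B) Z)] :
    relEulerAt Sd N B Y = relEulerAt Sd N B X * relEulerAt Sd N B Z :=
  relEulerAt_mul_of_card Sd N _ (card_hom_mul_card_coker_postcomp h B)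
    (prod_card_stHom_eq_card_coker_postcomp hpi Sd h B N)

end EulerForm

end RelativeEuler

theorem relative_euler_form_multiplicative_general
    {𝒞 : Type u} [Category.{v} 𝒞] [Preadditive 𝒞]
    [HasZeroObject 𝒞] [HasBinaryBiproducts 𝒞]
    (E : ExactStructure 𝒞) (hFrob : IsFrobenius E)
    (homFin : ∀ A B : 𝒞, Finite (A ⟶ B))
    (Sd : SuspData E) :
    ∀ ⦃A₁ A₂ A₃ : 𝒞⦄ (i : A₁ ⟶ A₂) (p : A₂ ⟶ A₃), E.conf i p → ∀ (B : 𝒞) (N : ℕ),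
      (∀ j : ℕ, N < j →
        (Subsingleton (StHom E (SIter Sd j A₁) B) ∧
         Subsingleton (StHom E (SIter Sd j A₂) B) ∧
         Subsingleton (StHom E (SIter Sd j A₃) B) ∧
         Subsingleton (StHom E (SIter Sd j B) A₁) ∧
         Subsingleton (StHom E (SIter Sd j B) A₂) ∧
         Subsingleton (StHom E (SIter Sd j B) A₃))) →
      relEulerAt Sd N A₂ B = relEulerAt Sd N A₁ B * relEulerAt Sd N A₃ B ∧
      relEulerAt Sd N B A₂ = relEulerAt Sd N B A₁ * relEulerAt Sd N B A₃ := by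
  intro A₁ A₂ A₃ i p h B N hvan
  have := homFin
  have hpi (P : 𝒞) : E.Proj P → E.Inj P := (hFrob.proj_iff_inj P).1
  obtain ⟨h₁, -, -, -, -, h₃⟩ := hvan (N + 1) N.lt_succ_self
  exact ⟨relEulerAt_mul_of_conf_left hpi Sd h B N, relEulerAt_mul_of_conf_right hpi Sd h B N⟩

/-- Lemma 4.1.  Let `F` be a Frobenius category satisfying (C1), (C2) whose
stable category `F̄` is left locally homologically finite.  Then the relative Euler form
`⟨A,B⟩ = (|Hom_F(A,B)| / |Hom_F̄(A,B)|) ⬝ ∏_{i>0} |Ext^{-i}_F̄(A,B)|^((-1)^(i-1))`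
descends to a well-defined biadditive map `K₀(F) × K₀(F) → ℚˣ`: for every conflation
`A₁ ↣ A₂ ↠ A₃` in `F` and every object `B`,
`⟨A₂,B⟩ = ⟨A₁,B⟩ ⬝ ⟨A₃,B⟩` and `⟨B,A₂⟩ = ⟨B,A₁⟩ ⬝ ⟨B,A₃⟩`.
(The form is expressed by its truncation `relEulerAt Sd N`, which computes it as soon as all
the stable `Ext^{-j}` with `j > N` between the objects involved vanish.) -/
theorem relative_euler_form_multiplicative
    {k : Type} [Field k] [Finite k]
    {𝒞 : Type u} [Category.{v} 𝒞] [Preadditive 𝒞] [CategoryTheory.Linear k 𝒞]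
    [HasZeroObject 𝒞] [HasBinaryBiproducts 𝒞] [EssentiallySmall.{v} 𝒞]
    [IsIdempotentComplete 𝒞]
    (E : ExactStructure 𝒞) (hFrob : IsFrobenius E)
    (homFin : ∀ A B : 𝒞, Finite (A ⟶ B))
    (Sd : SuspData E)
    (llhf : ∀ A B : 𝒞, ∃ N : ℕ, ∀ i : ℕ, N < i → Subsingleton (StHom E (SIter Sd i A) B)) :
    ∀ ⦃A₁ A₂ A₃ : 𝒞⦄ (i : A₁ ⟶ A₂) (p : A₂ ⟶ A₃), E.conf i p → ∀ (B : 𝒞) (N : ℕ),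
      (∀ j : ℕ, N < j →
        (Subsingleton (StHom E (SIter Sd j A₁) B) ∧
         Subsingleton (StHom E (SIter Sd j A₂) B) ∧
         Subsingleton (StHom E (SIter Sd j A₃) B) ∧
         Subsingleton (StHom E (SIter Sd j B) A₁) ∧
         Subsingleton (StHom E (SIter Sd j B) A₂) ∧
         Subsingleton (StHom E (SIter Sd j B) A₃))) →
      relEulerAt Sd N A₂ B = relEulerAt Sd N A₁ B * relEulerAt Sd N A₃ B ∧
      relEulerAt Sd N B A₂ = relEulerAt Sd N B A₁ * relEulerAt Sd N B A₃ :=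
  relative_euler_form_multiplicative_general E hFrob homFin Sd

end HallPaper
end
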